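/- arXiv:1811.05584 — 6 statements merged into one kernel-verified Lean document; each statement's English description precedes it below -/
import Mathlib

section
/- There exist δ > 0 and q < 1 such that for every p with |p − 3/4| ≤ δ, every n ≥ 1, and every λ ∈ ℝ^n with ∑_{j=1}^n λ_j² = 1, one has 𝔼| ∑_{j=1}^n λ_j ξ_j | ≤ q, where ξ_1, …, ξ_n are the i.i.d. random variables associated with p. The bounds δ and q do not depend on n or on λ. -/
/-- The value of the random variable `ξ_j` associated with `p`: it takes the value
`√((1−p)/p)` (encoded by `true`) and `−√(p/(1−p))` (encoded by `false`). -/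
noncomputable def xiVal (p : ℝ) (b : Bool) : ℝ :=
  if b then Real.sqrt ((1 - p) / p) else -Real.sqrt (p / (1 - p))

/-- The probability weight: `true` (the value `√((1−p)/p)`) has probability `p`,
`false` (the value `−√(p/(1−p))`) has probability `1 − p`. -/
def wt (p : ℝ) (b : Bool) : ℝ := if b then p else 1 - p

/-- `𝔼|∑_{j=1}^n λ_j ξ_j|` for i.i.d. `ξ_1, …, ξ_n` associated with `p`, written as the
explicit expectation over the product space `Bool^n`. -/
noncomputable def expAbsSum (p : ℝ) (n : ℕ) (l : Fin n → ℝ) : ℝ :=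
  ∑ σ : Fin n → Bool, (∏ j, wt p (σ j)) * |∑ j, l j * xiVal p (σ j)|

/-!
The two values of `ξ` multiply to `-1`, so `ξ² = γ ξ + 1` with `γ = skew p`, the sum of the two
values. Hence the moments of `ξ` satisfy `𝔼ξ^(k+2) = γ 𝔼ξ^(k+1) + 𝔼ξ^k`, giving `𝔼ξ³ = γ`,
`𝔼ξ⁴ = γ² + 1` and `𝔼ξ⁶ = γ⁴ + 3γ² + 1`. Near `p = 3/4` one has `1 ≤ γ² ≤ 2`, and peeling off one
coordinate at a time shows that `S = ∑ λ_j ξ_j` with `∑ λ_j² = 1` has `𝔼S² = 1`, `𝔼S⁴ ≥ 2` and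
`𝔼S⁶ ≤ 40`. Since `10000 |s| ≤ 4900 + 5200 s² − 100 s⁴ + s⁶` for every real `s`, this gives
`𝔼|S| ≤ 9940 / 10000`.
-/

open Finset

noncomputable def skew (p : ℝ) : ℝ := xiVal p true + xiVal p false

noncomputable def xiMoment (p : ℝ) (k : ℕ) : ℝ := ∑ b, wt p b * xiVal p b ^ k

noncomputable def sumMoment (p : ℝ) (n : ℕ) (l : Fin n → ℝ) (k : ℕ) : ℝ :=
  ∑ σ : Fin n → Bool, (∏ j, wt p (σ j)) * (∑ j, l j * xiVal p (σ j)) ^ k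

lemma sum_univ_fin_succ_fun {α M : Type*} [Fintype α] [AddCommMonoid M] {n : ℕ}
    (f : (Fin (n + 1) → α) → M) : ∑ σ, f σ = ∑ a, ∑ τ : Fin n → α, f (Fin.cons a τ) := by
  rw [← (Fin.consEquiv fun _ => α).sum_comp, Fintype.sum_prod_type]
  rfl

section TwoPoint

variable {p : ℝ}

lemma wt_nonneg (hp : p ∈ Set.Icc 0 1) (b : Bool) : 0 ≤ wt p b := by
  cases b <;> simp [wt, hp.1, hp.2]

lemma xiVal_true_sq (hp : p ∈ Set.Ioo 0 1) : xiVal p true ^ 2 = (1 - p) / p :=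
  Real.sq_sqrt (div_nonneg (sub_nonneg.2 hp.2.le) hp.1.le)

lemma xiVal_false_sq (hp : p ∈ Set.Ioo 0 1) : xiVal p false ^ 2 = p / (1 - p) := by
  rw [xiVal, if_neg Bool.false_ne_true, neg_sq]
  exact Real.sq_sqrt (div_nonneg hp.1.le (sub_nonneg.2 hp.2.le))

lemma xiVal_true_mul_xiVal_false (hp : p ∈ Set.Ioo 0 1) :
    xiVal p true * xiVal p false = -1 := by
  obtain ⟨hp0, hp1⟩ := hp
  have : 0 < 1 - p := sub_pos.2 hp1
  simp only [xiVal, if_true, Bool.false_eq_true, if_false, mul_neg]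
  rw [← Real.sqrt_mul (by positivity), div_mul_div_comm, mul_comm (1 - p),
    div_self (by positivity), Real.sqrt_one]

lemma xiVal_sq (hp : p ∈ Set.Ioo 0 1) (b : Bool) :
    xiVal p b ^ 2 = skew p * xiVal p b + 1 := by
  have h := xiVal_true_mul_xiVal_false hp
  cases b <;> rw [skew] <;> linear_combination -h

lemma skew_sq (hp : p ∈ Set.Ioo 0 1) : skew p ^ 2 = (1 - 2 * p) ^ 2 / (p * (1 - p)) := by
  have : 0 < 1 - p := sub_pos.2 hp.2
  have : 0 < p := hp.1
  rw [skew, add_sq, xiVal_true_sq hp, xiVal_false_sq hp, mul_assoc,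
    xiVal_true_mul_xiVal_false hp]
  field_simp
  ring

lemma xiMoment_zero : xiMoment p 0 = 1 := by
  simp [xiMoment, wt]

lemma xiMoment_one (hp : p ∈ Set.Ioo 0 1) : xiMoment p 1 = 0 := by
  have hsq : p * xiVal p true ^ 2 = 1 - p := by
    rw [xiVal_true_sq hp, mul_div_cancel₀ _ hp.1.ne']
  simp only [xiMoment, Fintype.sum_bool, wt, if_true, Bool.false_eq_true, if_false, pow_one]
  linear_combination p * xiVal p true * xiVal_true_mul_xiVal_false hp - xiVal p false * hsq

lemma xiMoment_add_two (hp : p ∈ Set.Ioo 0 1) (k : ℕ) :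
    xiMoment p (k + 2) = skew p * xiMoment p (k + 1) + xiMoment p k := by
  simp only [xiMoment, pow_add, xiVal_sq hp, Fintype.sum_bool]
  ring

lemma xiMoment_two (hp : p ∈ Set.Ioo 0 1) : xiMoment p 2 = 1 := by
  simp [xiMoment_add_two hp 0, xiMoment_one hp, xiMoment_zero]

lemma xiMoment_three (hp : p ∈ Set.Ioo 0 1) : xiMoment p 3 = skew p := by
  simp [xiMoment_add_two hp 1, xiMoment_two hp, xiMoment_one hp]

lemma xiMoment_four (hp : p ∈ Set.Ioo 0 1) : xiMoment p 4 = skew p ^ 2 + 1 := by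
  rw [xiMoment_add_two hp 2, xiMoment_three hp, xiMoment_two hp]
  ring

lemma xiMoment_six (hp : p ∈ Set.Ioo 0 1) :
    xiMoment p 6 = skew p ^ 4 + 3 * skew p ^ 2 + 1 := by
  rw [xiMoment_add_two hp 4, xiMoment_add_two hp 3, xiMoment_four hp, xiMoment_three hp]
  ring

lemma skew_sq_mem_Icc (hp : |p - 3 / 4| ≤ 1 / 100) : 1 ≤ skew p ^ 2 ∧ skew p ^ 2 ≤ 2 := by
  obtain ⟨hlo, hhi⟩ := abs_le.1 hp
  have hp0 : 0 < p := by linarith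
  have hp1 : 0 < 1 - p := by linarith
  rw [skew_sq ⟨hp0, by linarith⟩, le_div_iff₀ (by positivity), div_le_iff₀ (by positivity)]
  constructor <;> nlinarith

end TwoPoint

lemma sumMoment_succ (p : ℝ) {n : ℕ} (l : Fin (n + 1) → ℝ) (k : ℕ) :
    sumMoment p (n + 1) l k = ∑ i ∈ range (k + 1),
      k.choose i * l 0 ^ i * xiMoment p i * sumMoment p n (Fin.tail l) (k - i) := by
  simp only [sumMoment, xiMoment, sum_univ_fin_succ_fun, Fin.prod_univ_succ, Fin.sum_univ_succ,
    Fin.cons_zero, Fin.cons_succ, add_pow, mul_sum, sum_mul]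
  rw [sum_comm, eq_comm, sum_comm]
  refine sum_congr rfl fun τ _ => ?_
  rw [sum_comm]
  refine sum_congr rfl fun b _ => sum_congr rfl fun i _ => ?_
  simp only [Fin.tail]
  ring

lemma sum_sq_succ {n : ℕ} (l : Fin (n + 1) → ℝ) :
    ∑ j, l j ^ 2 = l 0 ^ 2 + ∑ j, Fin.tail l j ^ 2 :=
  Fin.sum_univ_succ _

lemma sumMoment_zero (p : ℝ) {n : ℕ} (l : Fin n → ℝ) : sumMoment p n l 0 = 1 := by
  simp only [sumMoment, pow_zero, mul_one]
  rw [← Fintype.prod_sum]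
  simp [wt]

section Moments

variable {p : ℝ}

lemma sumMoment_one (hp : p ∈ Set.Ioo 0 1) {n : ℕ} (l : Fin n → ℝ) : sumMoment p n l 1 = 0 := by
  induction n with
  | zero => simp [sumMoment]
  | succ n ih =>
    simp [sumMoment_succ, sum_range_succ, xiMoment_zero, xiMoment_one hp, ih, sumMoment_zero]

lemma sumMoment_two (hp : p ∈ Set.Ioo 0 1) {n : ℕ} (l : Fin n → ℝ) :
    sumMoment p n l 2 = ∑ j, l j ^ 2 := by
  induction n with
  | zero => simp [sumMoment]
  | succ n ih =>
    simp [sumMoment_succ, sum_range_succ, xiMoment_zero, xiMoment_one hp, xiMoment_two hp, ih,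
      sumMoment_zero, sumMoment_one hp, sum_sq_succ l]
    ring

lemma sumMoment_three_succ (hp : p ∈ Set.Ioo 0 1) {n : ℕ} (l : Fin (n + 1) → ℝ) :
    sumMoment p (n + 1) l 3 = sumMoment p n (Fin.tail l) 3 + l 0 ^ 3 * skew p := by
  simp [sumMoment_succ, sum_range_succ, Nat.choose, xiMoment_zero, xiMoment_one hp,
    xiMoment_two hp, xiMoment_three hp, sumMoment_zero, sumMoment_one hp]

lemma sumMoment_four_succ (hp : p ∈ Set.Ioo 0 1) {n : ℕ} (l : Fin (n + 1) → ℝ) :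
    sumMoment p (n + 1) l 4 = sumMoment p n (Fin.tail l) 4
      + 6 * l 0 ^ 2 * ∑ j, Fin.tail l j ^ 2 + l 0 ^ 4 * (skew p ^ 2 + 1) := by
  simp [sumMoment_succ, sum_range_succ, Nat.choose, xiMoment_zero, xiMoment_one hp,
    xiMoment_two hp, xiMoment_three hp, xiMoment_four hp, sumMoment_zero, sumMoment_one hp,
    sumMoment_two hp]

lemma sumMoment_six_succ (hp : p ∈ Set.Ioo 0 1) {n : ℕ} (l : Fin (n + 1) → ℝ) :
    sumMoment p (n + 1) l 6 = sumMoment p n (Fin.tail l) 6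
      + 15 * l 0 ^ 2 * sumMoment p n (Fin.tail l) 4
      + 20 * l 0 ^ 3 * skew p * sumMoment p n (Fin.tail l) 3
      + 15 * l 0 ^ 4 * (skew p ^ 2 + 1) * ∑ j, Fin.tail l j ^ 2
      + l 0 ^ 6 * (skew p ^ 4 + 3 * skew p ^ 2 + 1) := by
  simp [sumMoment_succ, sum_range_succ, Nat.choose, xiMoment_zero, xiMoment_one hp,
    xiMoment_two hp, xiMoment_three hp, xiMoment_four hp, xiMoment_six hp, sumMoment_zero,
    sumMoment_one hp, sumMoment_two hp]

lemma abs_sumMoment_three_le (hp : p ∈ Set.Ioo 0 1) {n : ℕ} (l : Fin n → ℝ) :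
    |sumMoment p n l 3| ≤ |skew p| * (∑ j, l j ^ 2) * Real.sqrt (∑ j, l j ^ 2) := by
  induction n with
  | zero => simp [sumMoment]
  | succ n ih =>
    set t := ∑ j, Fin.tail l j ^ 2
    have ht : 0 ≤ t := sum_nonneg fun j _ => sq_nonneg _
    have hx : |l 0| ^ 3 = l 0 ^ 2 * Real.sqrt (l 0 ^ 2) := by
      rw [Real.sqrt_sq_eq_abs, ← sq_abs]
      ring
    rw [sumMoment_three_succ hp, sum_sq_succ]
    calc |sumMoment p n (Fin.tail l) 3 + l 0 ^ 3 * skew p|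
        ≤ |skew p| * t * Real.sqrt t + |l 0| ^ 3 * |skew p| := by
          grw [abs_add_le, ih, abs_mul, abs_pow]
      _ = |skew p| * (t * Real.sqrt t + l 0 ^ 2 * Real.sqrt (l 0 ^ 2)) := by
          rw [hx]
          ring
      _ ≤ |skew p| * (t * Real.sqrt (l 0 ^ 2 + t) + l 0 ^ 2 * Real.sqrt (l 0 ^ 2 + t)) := by
          gcongr <;> linarith [sq_nonneg (l 0)]
      _ = |skew p| * (l 0 ^ 2 + t) * Real.sqrt (l 0 ^ 2 + t) := by ring

lemma two_mul_sq_le_sumMoment_four (hp : p ∈ Set.Ioo 0 1) (hskew : 1 ≤ skew p ^ 2) {n : ℕ}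
    (l : Fin n → ℝ) : 2 * (∑ j, l j ^ 2) ^ 2 ≤ sumMoment p n l 4 := by
  induction n with
  | zero => simp [sumMoment]
  | succ n ih =>
    rw [sumMoment_four_succ hp, sum_sq_succ]
    have ht : 0 ≤ ∑ j, Fin.tail l j ^ 2 := sum_nonneg fun j _ => sq_nonneg _
    nlinarith [ih (Fin.tail l), mul_nonneg (pow_nonneg (sq_nonneg (l 0)) 2) (sub_nonneg.2 hskew),
      mul_nonneg (sq_nonneg (l 0)) ht]

lemma sumMoment_four_le (hp : p ∈ Set.Ioo 0 1) (hskew : skew p ^ 2 ≤ 2) {n : ℕ}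
    (l : Fin n → ℝ) : sumMoment p n l 4 ≤ 3 * (∑ j, l j ^ 2) ^ 2 := by
  induction n with
  | zero => simp [sumMoment]
  | succ n ih =>
    rw [sumMoment_four_succ hp, sum_sq_succ]
    have ht : 0 ≤ ∑ j, Fin.tail l j ^ 2 := sum_nonneg fun j _ => sq_nonneg _
    nlinarith [ih (Fin.tail l), mul_nonneg (pow_nonneg (sq_nonneg (l 0)) 2) (sub_nonneg.2 hskew),
      mul_nonneg (sq_nonneg (l 0)) ht]

lemma sumMoment_six_le (hp : p ∈ Set.Ioo 0 1) (hskew : skew p ^ 2 ≤ 2) {n : ℕ}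
    (l : Fin n → ℝ) : sumMoment p n l 6 ≤ 40 * (∑ j, l j ^ 2) ^ 3 := by
  induction n with
  | zero => simp [sumMoment]
  | succ n ih =>
    set x := l 0
    set t := ∑ j, Fin.tail l j ^ 2
    set m₃ := sumMoment p n (Fin.tail l) 3
    have ht : 0 ≤ t := sum_nonneg fun j _ => sq_nonneg _
    have hx : 0 ≤ x ^ 2 := sq_nonneg x
    have hcross : 20 * x ^ 3 * skew p * m₃ ≤ 20 * x ^ 2 * t * (x ^ 2 + t) := by
      have amgm : |x| * Real.sqrt t ≤ (x ^ 2 + t) / 2 := by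
        nlinarith [sq_nonneg (|x| - Real.sqrt t), Real.sq_sqrt ht, sq_abs x]
      calc 20 * x ^ 3 * skew p * m₃
          ≤ 20 * |x| ^ 3 * |skew p| * |m₃| := by
            have h := le_abs_self (x ^ 3 * skew p * m₃)
            rw [abs_mul, abs_mul, abs_pow] at h
            linarith
        _ ≤ 20 * |x| ^ 3 * |skew p| * (|skew p| * t * Real.sqrt t) := by
            gcongr
            exact abs_sumMoment_three_le hp _
        _ = 10 * skew p ^ 2 * (x ^ 2 * t) * (2 * (|x| * Real.sqrt t)) := by
            rw [← sq_abs (skew p), ← sq_abs x]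
            ring
        _ ≤ 10 * 2 * (x ^ 2 * t) * (2 * ((x ^ 2 + t) / 2)) := by gcongr
        _ = 20 * x ^ 2 * t * (x ^ 2 + t) := by ring
    have h₄ : 15 * x ^ 2 * sumMoment p n (Fin.tail l) 4 ≤ 15 * x ^ 2 * (3 * t ^ 2) := by
      gcongr
      exact sumMoment_four_le hp hskew _
    have hξ₄ : 15 * x ^ 4 * (skew p ^ 2 + 1) * t ≤ 15 * x ^ 4 * 3 * t := by
      gcongr
      linarith
    have hξ₆ : x ^ 6 * (skew p ^ 4 + 3 * skew p ^ 2 + 1) ≤ x ^ 6 * 11 := by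
      gcongr
      nlinarith [sq_nonneg (skew p)]
    rw [sumMoment_six_succ hp, sum_sq_succ]
    nlinarith [ih (Fin.tail l), mul_nonneg hx (mul_nonneg ht ht), mul_nonneg (mul_nonneg hx hx) ht,
      pow_nonneg hx 3]

end Moments

lemma expAbsSum_le_of_abs_le {p : ℝ} (hp : p ∈ Set.Icc 0 1) {a b c d : ℝ}
    (h : ∀ s : ℝ, |s| ≤ a + b * s ^ 2 + c * s ^ 4 + d * s ^ 6) (n : ℕ) (l : Fin n → ℝ) :
    expAbsSum p n l ≤ a * sumMoment p n l 0 + b * sumMoment p n l 2 + c * sumMoment p n l 4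
      + d * sumMoment p n l 6 := by
  simp only [expAbsSum, sumMoment, mul_sum, ← sum_add_distrib]
  refine sum_le_sum fun σ _ => ?_
  have hw : 0 ≤ ∏ j, wt p (σ j) := prod_nonneg fun j _ => wt_nonneg hp _
  nlinarith [mul_le_mul_of_nonneg_left (h (∑ j, l j * xiVal p (σ j))) hw]

/- `10000 (rhs - s) = (s - 1)² ((s² + s - 50)² + 2 (s - 24)²) + (1253 s² - 2500 s + 1248)`,
and the last quadratic has negative discriminant. -/
lemma le_sextic (s : ℝ) :
    s ≤ 49 / 100 + 52 / 100 * s ^ 2 + (-1 / 100) * s ^ 4 + 1 / 10000 * s ^ 6 := by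
  nlinarith [mul_nonneg (sq_nonneg (s - 1))
      (add_nonneg (sq_nonneg (s ^ 2 + s - 50)) (sq_nonneg (s - 24))),
    sq_nonneg (s - 1250 / 1253)]

lemma abs_le_sextic (s : ℝ) :
    |s| ≤ 49 / 100 + 52 / 100 * s ^ 2 + (-1 / 100) * s ^ 4 + 1 / 10000 * s ^ 6 := by
  refine abs_le'.2 ⟨le_sextic s, ?_⟩
  simpa only [even_two.neg_pow, (by decide : Even 4).neg_pow, (by decide : Even 6).neg_pow]
    using le_sextic (-s)

/-- There exist `δ > 0` and `q < 1` such that for every `p` with `|p − 3/4| ≤ δ`,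
every `n ≥ 1` and every unit vector `λ ∈ ℝ^n`, one has `𝔼|∑ λ_j ξ_j| ≤ q`, where
`ξ_1, …, ξ_n` are the i.i.d. random variables associated with `p`.  The bounds `δ`
and `q` do not depend on `n` or `λ`. -/
theorem khinchine_deficit_near_three_quarters :
    ∃ δ > (0 : ℝ), ∃ q < (1 : ℝ),
      ∀ p : ℝ, |p - 3 / 4| ≤ δ →
        ∀ n : ℕ, 1 ≤ n → ∀ l : Fin n → ℝ, (∑ j, (l j) ^ 2) = 1 →
          expAbsSum p n l ≤ q := by
  refine ⟨1 / 100, by norm_num, 497 / 500, by norm_num, fun p hp n _ l hl => ?_⟩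
  have hp01 : p ∈ Set.Ioo 0 1 := by
    rw [abs_le] at hp
    constructor <;> linarith
  obtain ⟨hskew₁, hskew₂⟩ := skew_sq_mem_Icc hp
  have h := expAbsSum_le_of_abs_le (Set.Ioo_subset_Icc_self hp01) abs_le_sextic n l
  have h₄ := two_mul_sq_le_sumMoment_four hp01 hskew₁ l
  have h₆ := sumMoment_six_le hp01 hskew₂ l
  rw [sumMoment_zero, sumMoment_two hp01, hl] at h
  rw [hl] at h₄ h₆
  linarith
end

section
/- For every p ∈ (1/2, 1) there exists q(p) < 1 such that for every n ≥ 1 and every λ ∈ ℝ^n with ∑_{j=1}^n λ_j² = 1, one has 𝔼| ∑_{j=1}^n λ_j ξ_j | ≤ q(p), where ξ_1, …, ξ_n are the i.i.d. random variables associated with p. That is, the deficit in the Khinchine-type L¹–L² comparison is uniform in the dimension n and in the unit vector λ. -/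
/-!
Write `S = ∑ λ_j ξ_j` and `s = √(p(1-p))`, so that `𝔼 S² = 1`; since `p ≠ 1/2`, `2s < 1`.
Fix `ε = s(1 - 2s)/2`.

If some `λ_{j₀}² ≥ 1 - ε`, condition on `ξ_{j₀}`: for `c = λ_{j₀}`, the function
`r ↦ 𝔼|c ξ + r|` lies below a parabola `2s|c| + βr + γr²`, and the remainder `R` of the sum is
centred with `𝔼 R² = 1 - c² ≤ ε`, so `𝔼|S| ≤ 2s + ε/s < 1`.

Otherwise every `λ_j² ≤ 1 - ε`, and then `𝔼 S⁴ ≥ 3 - 2∑λ_j⁴ ≥ 1 + 2ε` (because `𝔼 ξ⁴ ≥ 1`),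
while `1 + 𝔼 S⁶ ≤ e^C` with `C` depending only on `p`. Writing
`(S² - 1)² = (|S| - 1) · (|S| + 1)(S² - 1)` and using `𝔼(|S| - 1)² = 2(1 - 𝔼|S|)`,
Cauchy–Schwarz turns the excess `𝔼 S⁴ - 1` into the lower bound `ε² e^{-C}` for `1 - 𝔼|S|`.
-/

open Finset Real

namespace KhinchineDeficit

theorem two_mul_sum_eq_of_update_eq {ι : Type*} [Fintype ι] [DecidableEq ι] {k : ι}
    {Φ : Bool → (ι → Bool) → ℝ} (hΦ : ∀ b σ c, Φ b (Function.update σ k c) = Φ b σ) :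
    2 * ∑ σ : ι → Bool, Φ (σ k) σ = ∑ σ : ι → Bool, (Φ true σ + Φ false σ) := by
  set flip : (ι → Bool) → (ι → Bool) := fun σ => Function.update σ k (!σ k)
  have hflip : Function.Involutive flip := fun σ => by simp [flip]
  have hsum : ∑ σ, Φ (σ k) σ = ∑ σ, Φ (!σ k) σ := by
    rw [← Equiv.sum_comp (hflip.toPerm flip)]
    exact sum_congr rfl fun σ _ => by simp [flip, hΦ]
  rw [two_mul]
  nth_rewrite 2 [hsum]
  rw [← sum_add_distrib]
  exact sum_congr rfl fun σ _ => by cases σ k <;> simp [add_comm]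

variable {p : ℝ} {n : ℕ}

noncomputable def expect (p : ℝ) (f : (Fin n → Bool) → ℝ) : ℝ :=
  ∑ σ : Fin n → Bool, (∏ j, wt p (σ j)) * f σ

def mean (p : ℝ) (g : Bool → ℝ) : ℝ := p * g true + (1 - p) * g false

theorem expect_const (c : ℝ) : expect p (fun _ : Fin n → Bool => c) = c := by
  have h : ∑ σ : Fin n → Bool, ∏ j, wt p (σ j) = 1 := by
    rw [← Fintype.prod_sum]
    simp [wt]
  rw [expect, ← sum_mul, h, one_mul]

theorem expect_add (f g : (Fin n → Bool) → ℝ) :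
    expect p (fun σ => f σ + g σ) = expect p f + expect p g := by
  simp only [expect, mul_add, sum_add_distrib]

theorem expect_mul_left (c : ℝ) (f : (Fin n → Bool) → ℝ) :
    expect p (fun σ => c * f σ) = c * expect p f := by
  simp only [expect, mul_sum, mul_left_comm]

theorem expect_sum {ι : Type*} (s : Finset ι) (f : ι → (Fin n → Bool) → ℝ) :
    expect p (fun σ => ∑ i ∈ s, f i σ) = ∑ i ∈ s, expect p (f i) := by
  simp only [expect, mul_sum]
  exact sum_comm

section Nonneg

variable (hp0 : 0 ≤ p) (hp1 : p ≤ 1)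
include hp0 hp1

theorem prod_wt_nonneg (σ : Fin n → Bool) : 0 ≤ ∏ j, wt p (σ j) :=
  prod_nonneg fun j _ => by cases σ j <;> simp [wt] <;> linarith

theorem expect_mono {f g : (Fin n → Bool) → ℝ} (h : ∀ σ, f σ ≤ g σ) :
    expect p f ≤ expect p g :=
  sum_le_sum fun σ _ => mul_le_mul_of_nonneg_left (h σ) (prod_wt_nonneg hp0 hp1 σ)

theorem expect_nonneg {f : (Fin n → Bool) → ℝ} (h : ∀ σ, 0 ≤ f σ) : 0 ≤ expect p f :=
  (expect_const (p := p) (n := n) 0).symm.le.trans (expect_mono hp0 hp1 h)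

theorem abs_expect_le (f : (Fin n → Bool) → ℝ) :
    |expect p f| ≤ expect p (fun σ => |f σ|) :=
  (abs_sum_le_sum_abs _ _).trans_eq <| sum_congr rfl fun σ _ => by
    rw [abs_mul, abs_of_nonneg (prod_wt_nonneg hp0 hp1 σ)]

theorem expect_mul_sq_le (f g : (Fin n → Bool) → ℝ) :
    expect p (fun σ => f σ * g σ) ^ 2 ≤
      expect p (fun σ => f σ ^ 2) * expect p (fun σ => g σ ^ 2) :=
  sum_sq_le_sum_mul_sum_of_sq_le_mul _
    (fun σ _ => mul_nonneg (prod_wt_nonneg hp0 hp1 σ) (sq_nonneg _))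
    (fun σ _ => mul_nonneg (prod_wt_nonneg hp0 hp1 σ) (sq_nonneg _))
    fun σ _ => le_of_eq (by ring)

theorem abs_expect_pow_three_le (f : (Fin n → Bool) → ℝ) :
    |expect p (fun σ => f σ ^ 3)| ≤ (1 + expect p (fun σ => f σ ^ 6)) / 2 := by
  refine (abs_expect_le hp0 hp1 _).trans ((expect_mono hp0 hp1
    (g := fun σ => 1 / 2 + 1 / 2 * f σ ^ 6) fun σ => ?_).trans_eq ?_)
  · nlinarith [sq_nonneg (|f σ ^ 3| - 1), sq_abs (f σ ^ 3)]
  · rw [expect_add, expect_const, expect_mul_left]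
    ring

theorem expect_pow_four_le (f : (Fin n → Bool) → ℝ) :
    expect p (fun σ => f σ ^ 4) ≤
      (expect p (fun σ => f σ ^ 2) + expect p (fun σ => f σ ^ 6)) / 2 := by
  refine (expect_mono hp0 hp1 (g := fun σ => 1 / 2 * f σ ^ 2 + 1 / 2 * f σ ^ 6)
    fun σ => ?_).trans_eq ?_
  · nlinarith [sq_nonneg (f σ ^ 3 - f σ)]
  · rw [expect_add, expect_mul_left, expect_mul_left]
    ring

end Nonneg

theorem expect_apply_eq_mean (k : Fin n) {G : Bool → (Fin n → Bool) → ℝ}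
    (hG : ∀ b σ c, G b (Function.update σ k c) = G b σ) :
    expect p (fun σ => G (σ k) σ) = mean p fun b => expect p (G b) := by
  set rest : (Fin n → Bool) → ℝ := fun σ => ∏ j ∈ univ.erase k, wt p (σ j)
  have hrest : ∀ σ c, rest (Function.update σ k c) = rest σ := fun σ c =>
    prod_congr rfl fun j hj => by rw [Function.update_of_ne (ne_of_mem_erase hj)]
  have hprod : ∀ σ : Fin n → Bool, ∏ j, wt p (σ j) = wt p (σ k) * rest σ := fun σ =>
    (mul_prod_erase _ _ (mem_univ k)).symm
  have hsplit : ∀ (H : Bool → (Fin n → Bool) → ℝ), (∀ b σ c, H b (Function.update σ k c) = H b σ) →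
      2 * ∑ σ, wt p (σ k) * rest σ * H (σ k) σ =
        ∑ σ, (p * (rest σ * H true σ) + (1 - p) * (rest σ * H false σ)) := fun H hH => by
    rw [two_mul_sum_eq_of_update_eq (Φ := fun b σ => wt p b * rest σ * H b σ)
      fun b σ c => by simp only [hrest, hH]]
    simp only [wt, if_true, Bool.false_eq_true, if_false, mul_assoc]
  have hexpect : ∀ f, expect p f = ∑ σ, wt p (σ k) * rest σ * f σ := fun f => by
    simp only [expect, hprod]
  have htwice : ∀ b, 2 * expect p (G b) = ∑ σ, rest σ * G b σ := fun b => by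
    rw [hexpect, hsplit (fun _ => G b) fun _ => hG b]
    exact sum_congr rfl fun σ _ => by ring
  apply mul_left_cancel₀ (two_ne_zero (α := ℝ))
  rw [hexpect, hsplit G hG, sum_add_distrib, ← mul_sum, ← mul_sum, ← htwice, ← htwice, mean]
  ring

theorem expect_mul_eq_mean_mul (k : Fin n) (g : Bool → ℝ) {F : (Fin n → Bool) → ℝ}
    (hF : ∀ σ c, F (Function.update σ k c) = F σ) :
    expect p (fun σ => g (σ k) * F σ) = mean p g * expect p F := by
  rw [expect_apply_eq_mean k (G := fun b σ => g b * F σ) fun b σ c => by rw [hF]]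
  simp only [expect_mul_left, mean]
  ring

noncomputable def moment (p : ℝ) (i : ℕ) : ℝ := mean p fun b => xiVal p b ^ i

noncomputable def partialSum (p : ℝ) (l : Fin n → ℝ) (A : Finset (Fin n)) (σ : Fin n → Bool) :
    ℝ :=
  ∑ j ∈ A, l j * xiVal p (σ j)

variable {l : Fin n → ℝ}

theorem partialSum_update {A : Finset (Fin n)} {k : Fin n} (hk : k ∉ A) (σ : Fin n → Bool)
    (c : Bool) : partialSum p l A (Function.update σ k c) = partialSum p l A σ :=
  sum_congr rfl fun j hj => by rw [Function.update_of_ne (ne_of_mem_of_not_mem hj hk)]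

theorem expect_partialSum_insert_pow {A : Finset (Fin n)} {k : Fin n} (hk : k ∉ A) (m : ℕ) :
    expect p (fun σ => partialSum p l (insert k A) σ ^ m) =
      ∑ i ∈ range (m + 1), m.choose i * l k ^ i * moment p i *
        expect p (fun σ => partialSum p l A σ ^ (m - i)) := by
  simp only [partialSum, sum_insert hk, add_pow, expect_sum]
  refine sum_congr rfl fun i _ => ?_
  have hF : ∀ σ c, partialSum p l A (Function.update σ k c) ^ (m - i) =
      partialSum p l A σ ^ (m - i) := fun σ c => by rw [partialSum_update hk]
  have h := expect_mul_eq_mean_mul (p := p) k (fun b => xiVal p b ^ i)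
    (F := fun σ => partialSum p l A σ ^ (m - i)) hF
  rw [← moment] at h
  simp only [partialSum] at h
  rw [mul_assoc, ← h, ← expect_mul_left]
  congr 1
  ext σ
  ring

theorem moment_zero : moment p 0 = 1 := by
  simp [moment, mean]

theorem mul_xiVal_true (hp0 : 0 < p) : p * xiVal p true = √(p * (1 - p)) := by
  calc p * xiVal p true = √(p ^ 2) * √((1 - p) / p) := by rw [sqrt_sq hp0.le]; rfl
    _ = √(p * (1 - p)) := by rw [← sqrt_mul (sq_nonneg p)]; congr 1; field_simp

section Moments

variable (hp0 : 0 < p) (hp1 : p < 1)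
include hp0 hp1

theorem xiVal_true_sq : xiVal p true ^ 2 = (1 - p) / p :=
  sq_sqrt (div_nonneg (by linarith) hp0.le)

theorem xiVal_false_sq : xiVal p false ^ 2 = p / (1 - p) := by
  rw [xiVal, if_neg Bool.false_ne_true, neg_sq]
  exact sq_sqrt (div_nonneg hp0.le (by linarith))


theorem mul_xiVal_false : (1 - p) * xiVal p false = -√(p * (1 - p)) := by
  have : 0 < 1 - p := by linarith
  calc (1 - p) * xiVal p false = -(√((1 - p) ^ 2) * √(p / (1 - p))) := by
        rw [sqrt_sq this.le, xiVal, if_neg Bool.false_ne_true, mul_neg]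
    _ = -√(p * (1 - p)) := by rw [← sqrt_mul (sq_nonneg _)]; congr 2; field_simp

theorem moment_one : moment p 1 = 0 := by
  simp only [moment, mean, pow_one, mul_xiVal_true hp0, mul_xiVal_false hp0 hp1]
  ring

theorem moment_two : moment p 2 = 1 := by
  have : 1 - p ≠ 0 := by linarith
  simp only [moment, mean, xiVal_true_sq hp0 hp1, xiVal_false_sq hp0 hp1]
  field_simp
  ring

theorem one_le_moment_four : 1 ≤ moment p 4 := by
  have h4 : ∀ b, xiVal p b ^ 4 = (xiVal p b ^ 2) ^ 2 := fun b => by ring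
  have : 0 < 1 - p := by linarith
  simp only [moment, mean, h4, xiVal_true_sq hp0 hp1, xiVal_false_sq hp0 hp1]
  rw [← sub_nonneg]
  field_simp
  nlinarith [sq_nonneg (2 * p - 1)]

theorem moment_six_nonneg : 0 ≤ moment p 6 := by
  unfold moment mean
  have : 0 < 1 - p := by linarith
  positivity

end Moments

theorem expect_partialSum_empty_pow {m : ℕ} (hm : m ≠ 0) :
    expect p (fun σ => partialSum p l ∅ σ ^ m) = 0 := by
  simp [partialSum, zero_pow hm, expect_const]

-- The binomial coefficients `15, 20, 15` of `(x + y)⁶`, after bounding `𝔼 S⁴` and `|𝔼 S³|`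
-- by `(1 + 𝔼 S⁶)/2` (and `15/2` by `8`).
noncomputable def sixthMomentConst (p : ℝ) : ℝ :=
  8 + 10 * |moment p 3| + 15 * moment p 4 + moment p 6

section PartialSumMoments

variable (hp0 : 0 < p) (hp1 : p < 1)
include hp0 hp1

theorem expect_partialSum (A : Finset (Fin n)) : expect p (partialSum p l A) = 0 := by
  induction A using Finset.induction_on with
  | empty => simpa using expect_partialSum_empty_pow (p := p) (l := l) one_ne_zero
  | insert k A hk ih =>
    simpa [sum_range_succ, moment_zero, moment_one hp0 hp1, ih]
      using expect_partialSum_insert_pow (p := p) (l := l) hk 1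

theorem expect_partialSum_sq (A : Finset (Fin n)) :
    expect p (fun σ => partialSum p l A σ ^ 2) = ∑ j ∈ A, l j ^ 2 := by
  induction A using Finset.induction_on with
  | empty => simpa using expect_partialSum_empty_pow (p := p) (l := l) two_ne_zero
  | insert k A hk ih =>
    have h := expect_partialSum_insert_pow (p := p) (l := l) hk 2
    simp [sum_range_succ, moment_zero, moment_one hp0 hp1, moment_two hp0 hp1, ih,
      expect_const] at h
    rw [h, sum_insert hk]
    ring

theorem expect_partialSum_insert_pow_four {A : Finset (Fin n)} {k : Fin n} (hk : k ∉ A) :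
    expect p (fun σ => partialSum p l (insert k A) σ ^ 4) =
      expect p (fun σ => partialSum p l A σ ^ 4) + 6 * l k ^ 2 * ∑ j ∈ A, l j ^ 2 +
        l k ^ 4 * moment p 4 := by
  simpa [sum_range_succ, moment_zero, moment_one hp0 hp1, moment_two hp0 hp1,
    expect_partialSum hp0 hp1, expect_partialSum_sq hp0 hp1, expect_const, Nat.choose]
    using expect_partialSum_insert_pow (p := p) (l := l) hk 4

theorem expect_partialSum_insert_pow_six {A : Finset (Fin n)} {k : Fin n} (hk : k ∉ A) :
    expect p (fun σ => partialSum p l (insert k A) σ ^ 6) =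
      expect p (fun σ => partialSum p l A σ ^ 6) +
        15 * l k ^ 2 * expect p (fun σ => partialSum p l A σ ^ 4) +
        20 * l k ^ 3 * moment p 3 * expect p (fun σ => partialSum p l A σ ^ 3) +
        15 * l k ^ 4 * moment p 4 * ∑ j ∈ A, l j ^ 2 + l k ^ 6 * moment p 6 := by
  simpa [sum_range_succ, moment_zero, moment_one hp0 hp1, moment_two hp0 hp1,
    expect_partialSum hp0 hp1, expect_partialSum_sq hp0 hp1, expect_const, Nat.choose]
    using expect_partialSum_insert_pow (p := p) (l := l) hk 6

theorem le_expect_partialSum_pow_four (A : Finset (Fin n)) :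
    3 * (∑ j ∈ A, l j ^ 2) ^ 2 - 2 * ∑ j ∈ A, l j ^ 4 ≤
      expect p (fun σ => partialSum p l A σ ^ 4) := by
  induction A using Finset.induction_on with
  | empty => simp [expect_partialSum_empty_pow (p := p) (l := l) four_ne_zero]
  | insert k A hk ih =>
    rw [expect_partialSum_insert_pow_four hp0 hp1 hk, sum_insert hk, sum_insert hk]
    nlinarith [mul_le_mul_of_nonneg_left (one_le_moment_four hp0 hp1)
      (by positivity : (0 : ℝ) ≤ l k ^ 4)]

theorem one_add_expect_partialSum_insert_pow_six_le {A : Finset (Fin n)} {k : Fin n} (hk : k ∉ A)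
    (hA : l k ^ 2 + ∑ j ∈ A, l j ^ 2 ≤ 1) :
    1 + expect p (fun σ => partialSum p l (insert k A) σ ^ 6) ≤
      (1 + expect p (fun σ => partialSum p l A σ ^ 6)) * (1 + sixthMomentConst p * l k ^ 2) := by
  rw [expect_partialSum_insert_pow_six hp0 hp1 hk, sixthMomentConst]
  set S := partialSum p l A
  set E6 := expect p fun σ => S σ ^ 6
  set t := l k ^ 2
  set v := ∑ j ∈ A, l j ^ 2
  have hv0 : 0 ≤ v := sum_nonneg fun j _ => sq_nonneg _
  have ht0 : 0 ≤ t := sq_nonneg _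
  have hE6 : 0 ≤ E6 := expect_nonneg hp0.le hp1.le fun σ => by positivity
  have hE3 := abs_expect_pow_three_le hp0.le hp1.le S
  have hE4 := expect_pow_four_le hp0.le hp1.le S
  rw [expect_partialSum_sq hp0 hp1] at hE4
  have hlk : |l k| ≤ 1 := abs_le_one_iff_mul_self_le_one.mpr (by nlinarith)
  have hl3 : |l k| ^ 3 ≤ t := by
    rw [show t = |l k| ^ 2 from (sq_abs _).symm]
    exact pow_le_pow_of_le_one (abs_nonneg _) hlk (by norm_num)
  have hM4 := one_le_moment_four hp0 hp1
  have hM6 := moment_six_nonneg hp0 hp1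
  have h3 : l k ^ 3 * moment p 3 * expect p (fun σ => S σ ^ 3) ≤
      t * |moment p 3| * ((1 + E6) / 2) := by
    refine (le_abs_self _).trans ?_
    rw [abs_mul, abs_mul, abs_pow]
    gcongr
  have h4 : t ^ 2 * moment p 4 * v ≤ t * moment p 4 * (1 + E6) := by
    have : t ^ 2 ≤ t := by nlinarith
    gcongr
    linarith
  have h6 : t ^ 3 * moment p 6 ≤ t * moment p 6 * (1 + E6) := by
    have : t ^ 3 ≤ t := by nlinarith
    nlinarith [mul_nonneg (mul_nonneg ht0 hM6) hE6]
  have h2 : t * expect p (fun σ => S σ ^ 4) ≤ t * ((1 + E6) / 2) :=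
    mul_le_mul_of_nonneg_left (hE4.trans (by linarith)) ht0
  rw [show l k ^ 4 = t ^ 2 by ring, show l k ^ 6 = t ^ 3 by ring]
  linarith [mul_nonneg ht0 hE6]

theorem one_add_expect_partialSum_pow_six_le (A : Finset (Fin n)) (hA : ∑ j ∈ A, l j ^ 2 ≤ 1) :
    1 + expect p (fun σ => partialSum p l A σ ^ 6) ≤
      exp (sixthMomentConst p * ∑ j ∈ A, l j ^ 2) := by
  induction A using Finset.induction_on with
  | empty => simp [expect_partialSum_empty_pow (p := p) (l := l) (by norm_num : 6 ≠ 0)]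
  | insert k A hk ih =>
    rw [sum_insert hk] at hA ⊢
    have hC : 0 ≤ sixthMomentConst p := by
      have := one_le_moment_four hp0 hp1
      have := moment_six_nonneg hp0 hp1
      unfold sixthMomentConst
      positivity
    calc 1 + expect p (fun σ => partialSum p l (insert k A) σ ^ 6)
        ≤ (1 + expect p (fun σ => partialSum p l A σ ^ 6)) * (1 + sixthMomentConst p * l k ^ 2) :=
          one_add_expect_partialSum_insert_pow_six_le hp0 hp1 hk hA
      _ ≤ exp (sixthMomentConst p * ∑ j ∈ A, l j ^ 2) * exp (sixthMomentConst p * l k ^ 2) := by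
          gcongr
          · exact ih (by nlinarith [sq_nonneg (l k)])
          · linarith [add_one_le_exp (sixthMomentConst p * l k ^ 2)]
      _ = exp (sixthMomentConst p * (l k ^ 2 + ∑ j ∈ A, l j ^ 2)) := by
          rw [← exp_add]
          ring_nf

end PartialSumMoments

theorem sq_expect_pow_four_sub_one_le (hp0 : 0 ≤ p) (hp1 : p ≤ 1) {f : (Fin n → Bool) → ℝ}
    (hf : expect p (fun σ => f σ ^ 2) = 1) :
    (expect p (fun σ => f σ ^ 4) - 1) ^ 2 ≤
      4 * (1 - expect p (fun σ => |f σ|)) * (1 + expect p (fun σ => f σ ^ 6)) := by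
  have hfactor : expect p (fun σ => (|f σ| - 1) * ((|f σ| + 1) * (f σ ^ 2 - 1))) =
      expect p (fun σ => f σ ^ 4) - 1 := by
    have h : ∀ σ, (|f σ| - 1) * ((|f σ| + 1) * (f σ ^ 2 - 1)) = f σ ^ 4 + (-2 * f σ ^ 2 + 1) :=
      fun σ => by linear_combination (f σ ^ 2 - 1) * sq_abs (f σ)
    simp only [h, expect_add, expect_mul_left, expect_const, hf]
    ring
  have hdeficit : expect p (fun σ => (|f σ| - 1) ^ 2) = 2 * (1 - expect p (fun σ => |f σ|)) := by
    have h : ∀ σ, (|f σ| - 1) ^ 2 = f σ ^ 2 + (-2 * |f σ| + 1) :=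
      fun σ => by linear_combination sq_abs (f σ)
    simp only [h, expect_add, expect_mul_left, expect_const, hf]
    ring
  have htail : expect p (fun σ => ((|f σ| + 1) * (f σ ^ 2 - 1)) ^ 2) ≤
      2 * (1 + expect p (fun σ => f σ ^ 6)) := by
    refine (expect_mono hp0 hp1 (g := fun σ => 2 + 2 * f σ ^ 6) fun σ => ?_).trans_eq ?_
    · have hy := abs_nonneg (f σ)
      rw [show f σ ^ 6 = (f σ ^ 2) ^ 3 by ring, ← sq_abs (f σ)]
      nlinarith [mul_nonneg (sq_nonneg (|f σ| - 1)) (sq_nonneg (|f σ| ^ 2 - 1)),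
        pow_nonneg hy 4, pow_nonneg hy 2]
    · rw [expect_add, expect_const, expect_mul_left]
      ring
  have hnonneg : 0 ≤ 2 * (1 - expect p (fun σ => |f σ|)) :=
    hdeficit ▸ expect_nonneg hp0 hp1 fun σ => sq_nonneg _
  calc (expect p (fun σ => f σ ^ 4) - 1) ^ 2
      ≤ expect p (fun σ => (|f σ| - 1) ^ 2) *
          expect p (fun σ => ((|f σ| + 1) * (f σ ^ 2 - 1)) ^ 2) :=
        hfactor ▸ expect_mul_sq_le hp0 hp1 _ _
    _ ≤ 2 * (1 - expect p (fun σ => |f σ|)) * (2 * (1 + expect p (fun σ => f σ ^ 6))) := by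
        rw [hdeficit]
        exact mul_le_mul_of_nonneg_left htail hnonneg
    _ = 4 * (1 - expect p (fun σ => |f σ|)) * (1 + expect p (fun σ => f σ ^ 6)) := by ring

/- The left side is convex and piecewise linear in `r`, with value `2z` and slope `2p - 1` at `0`;
the parabola absorbs its kinks at `-x < 0 < -y` as long as `1 - p ≤ p`. -/
theorem weighted_abs_add_le_parabola {x y z r : ℝ} (hp : 1 / 2 ≤ p) (hp1 : p ≤ 1) (hz : 0 < z)
    (hx : p * x = z) (hy : (1 - p) * y = -z) :
    p * |x + r| + (1 - p) * |y + r| ≤ 2 * z + (2 * p - 1) * r + p ^ 2 / (2 * z) * r ^ 2 := by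
  have hx0 : 0 < x := pos_of_mul_pos_right (hx ▸ hz) (by linarith)
  have hy0 : y < 0 := neg_of_mul_neg_right (hy ▸ neg_neg_of_pos hz) (by linarith)
  rw [div_mul_eq_mul_div, ← sub_le_iff_le_add', le_div_iff₀ (by positivity)]
  rcases abs_cases (y + r) with ⟨hy', hyr⟩ | ⟨hy', hyr⟩
  · have hr : 0 ≤ r := by linarith
    rw [hy', abs_of_nonneg (by linarith)]
    nlinarith [sq_nonneg (p * r - 2 * z),
      mul_nonneg (mul_nonneg hz.le hr) (by linarith : 0 ≤ 2 * p - 1)]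
  · rw [hy']
    rcases abs_cases (x + r) with ⟨hx', _⟩ | ⟨hx', _⟩ <;> rw [hx'] <;>
      nlinarith [sq_nonneg (p * r + 2 * z)]

-- The linear coefficient depends on the sign of `c`; it is harmless because it multiplies a
-- centred variable.
theorem exists_mean_abs_mul_xiVal_add_le (hp : 1 / 2 < p) (hp1 : p < 1) {c : ℝ} (hc : c ≠ 0) :
    ∃ β : ℝ, ∀ r, mean p (fun b => |c * xiVal p b + r|) ≤
      2 * (√(p * (1 - p)) * |c|) + β * r + p ^ 2 / (2 * (√(p * (1 - p)) * |c|)) * r ^ 2 := by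
  have hp0 : 0 < p := by linarith
  have hz : 0 < √(p * (1 - p)) * |c| :=
    mul_pos (sqrt_pos.mpr (mul_pos hp0 (by linarith))) (abs_pos.mpr hc)
  have hx : ∀ d, p * (d * xiVal p true) = √(p * (1 - p)) * d := fun d => by
    rw [mul_left_comm, mul_xiVal_true hp0, mul_comm]
  have hy : ∀ d, (1 - p) * (d * xiVal p false) = -(√(p * (1 - p)) * d) := fun d => by
    rw [mul_left_comm, mul_xiVal_false hp0 hp1]
    ring
  rcases hc.lt_or_gt with hneg | hpos
  · refine ⟨-(2 * p - 1), fun r => ?_⟩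
    rw [abs_of_neg hneg] at hz ⊢
    have h := weighted_abs_add_le_parabola (r := -r) hp.le hp1.le hz (hx (-c)) (hy (-c))
    simp only [mean, neg_mul, ← neg_add, abs_neg] at h ⊢
    linarith [show (-r) ^ 2 = r ^ 2 from neg_sq r]
  · refine ⟨2 * p - 1, fun r => ?_⟩
    rw [abs_of_pos hpos] at hz ⊢
    exact weighted_abs_add_le_parabola hp.le hp1.le hz (hx c) (hy c)

theorem expAbsSum_le_of_ne_zero (hp : 1 / 2 < p) (hp1 : p < 1) (hl : ∑ j, l j ^ 2 = 1)
    {j₀ : Fin n} (hc : l j₀ ≠ 0) :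
    expAbsSum p n l ≤ 2 * (√(p * (1 - p)) * |l j₀|) +
      p ^ 2 / (2 * (√(p * (1 - p)) * |l j₀|)) * (1 - l j₀ ^ 2) := by
  have hp0 : 0 < p := by linarith
  set R := partialSum p l (univ.erase j₀)
  set γ := p ^ 2 / (2 * (√(p * (1 - p)) * |l j₀|))
  obtain ⟨β, hβ⟩ := exists_mean_abs_mul_xiVal_add_le hp hp1 hc
  have hR : ∀ σ c, R (Function.update σ j₀ c) = R σ := partialSum_update (notMem_erase j₀ _)
  calc expAbsSum p n l = expect p (fun σ => |l j₀ * xiVal p (σ j₀) + R σ|) := by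
        simp only [expAbsSum, expect, R, partialSum]
        exact sum_congr rfl fun σ _ => by
          rw [add_sum_erase univ (fun j => l j * xiVal p (σ j)) (mem_univ j₀)]
    _ = expect p (fun σ => mean p fun b => |l j₀ * xiVal p b + R σ|) := by
        rw [expect_apply_eq_mean j₀ (G := fun b σ => |l j₀ * xiVal p b + R σ|)
          fun b σ c => by rw [hR]]
        simp only [mean, expect_add, expect_mul_left]
    _ ≤ expect p (fun σ => 2 * (√(p * (1 - p)) * |l j₀|) + (β * R σ + γ * R σ ^ 2)) :=
        expect_mono hp0.le hp1.le fun σ => (hβ (R σ)).trans_eq (add_assoc _ _ _)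
    _ = 2 * (√(p * (1 - p)) * |l j₀|) + γ * (1 - l j₀ ^ 2) := by
        rw [expect_add, expect_const, expect_add, expect_mul_left, expect_mul_left,
          expect_partialSum hp0 hp1, expect_partialSum_sq hp0 hp1,
          sum_erase_eq_sub (mem_univ j₀), hl]
        ring

theorem expAbsSum_le_of_le_sq (hp : 1 / 2 < p) (hp1 : p < 1) (hl : ∑ j, l j ^ 2 = 1)
    {j₀ : Fin n} {ε : ℝ} (hε : ε ≤ 3 / 4) (hj₀ : 1 - ε ≤ l j₀ ^ 2) :
    expAbsSum p n l ≤ 2 * √(p * (1 - p)) + ε / √(p * (1 - p)) := by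
  have hs : 0 < √(p * (1 - p)) := sqrt_pos.mpr (mul_pos (by linarith) (by linarith))
  have hle : l j₀ ^ 2 ≤ 1 := hl ▸ single_le_sum (fun j _ => sq_nonneg (l j)) (mem_univ j₀)
  have hL1 : |l j₀| ≤ 1 := abs_le_one_iff_mul_self_le_one.mpr (by nlinarith)
  have hL2 : 1 / 2 ≤ |l j₀| := by nlinarith [sq_abs (l j₀), abs_nonneg (l j₀)]
  refine (expAbsSum_le_of_ne_zero hp hp1 hl (j₀ := j₀) (abs_pos.mp (by linarith))).trans ?_
  have hγ : p ^ 2 / (2 * (√(p * (1 - p)) * |l j₀|)) ≤ 1 / √(p * (1 - p)) :=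
    div_le_div₀ zero_le_one (by nlinarith) hs (by nlinarith)
  have h1 : 2 * (√(p * (1 - p)) * |l j₀|) ≤ 2 * √(p * (1 - p)) := by nlinarith
  have h2 := mul_le_mul hγ (show 1 - l j₀ ^ 2 ≤ ε by linarith) (by linarith) (by positivity)
  rw [one_div_mul_eq_div] at h2
  linarith

theorem expAbsSum_le_of_forall_sq_le (hp0 : 0 < p) (hp1 : p < 1) (hl : ∑ j, l j ^ 2 = 1)
    {ε : ℝ} (hε : 0 ≤ ε) (hsmall : ∀ j, l j ^ 2 ≤ 1 - ε) :
    expAbsSum p n l ≤ 1 - ε ^ 2 / exp (sixthMomentConst p) := by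
  set S := partialSum p l univ
  have h2 : expect p (fun σ => S σ ^ 2) = 1 := (expect_partialSum_sq hp0 hp1 univ).trans hl
  have h4 : 1 + 2 * ε ≤ expect p (fun σ => S σ ^ 4) := by
    have hquartic : ∑ j, l j ^ 4 ≤ 1 - ε :=
      calc ∑ j, l j ^ 4 ≤ ∑ j, (1 - ε) * l j ^ 2 :=
            sum_le_sum fun j _ => by nlinarith [hsmall j, sq_nonneg (l j)]
        _ = 1 - ε := by rw [← mul_sum, hl, mul_one]
    have := le_expect_partialSum_pow_four (l := l) hp0 hp1 univ
    rw [hl] at this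
    linarith
  have h6 : 1 + expect p (fun σ => S σ ^ 6) ≤ exp (sixthMomentConst p) := by
    simpa [hl] using one_add_expect_partialSum_pow_six_le hp0 hp1 univ hl.le
  have hE6 : 0 ≤ expect p (fun σ => S σ ^ 6) := expect_nonneg hp0.le hp1.le fun σ => by positivity
  have hdeficit := (pow_le_pow_left₀ (a := 2 * ε) (by positivity) (by linarith) 2).trans
    (sq_expect_pow_four_sub_one_le hp0.le hp1.le h2)
  change expect p (fun σ => |S σ|) ≤ _
  have hm : 0 ≤ 1 - expect p (fun σ => |S σ|) := by nlinarith
  rw [le_sub_comm, div_le_iff₀ (exp_pos _)]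
  nlinarith [mul_le_mul_of_nonneg_left h6 hm]

end KhinchineDeficit

open KhinchineDeficit

/-- For every `p ∈ (1/2, 1)` there exists `q(p) < 1` such that for every `n ≥ 1` and
every unit vector `λ ∈ ℝ^n` one has `𝔼|∑ λ_j ξ_j| ≤ q(p)`: the deficit in the
Khinchine-type `L¹`–`L²` comparison is uniform in `n` and in `λ`. -/
theorem khinchine_deficit_uniform :
    ∀ p ∈ Set.Ioo (1 / 2 : ℝ) 1, ∃ q < (1 : ℝ),
      ∀ n : ℕ, 1 ≤ n → ∀ l : Fin n → ℝ, (∑ j, (l j) ^ 2) = 1 →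
        expAbsSum p n l ≤ q := by
  rintro p ⟨hp, hp1⟩
  have hvar : 0 < p * (1 - p) := mul_pos (by linarith) (by linarith)
  set s := √(p * (1 - p))
  have hs : 0 < s := sqrt_pos.mpr hvar
  have hs2 : 2 * s < 1 := by nlinarith [sq_sqrt hvar.le]
  set ε := s * (1 - 2 * s) / 2 with hεdef
  have hε : 0 < ε := by positivity
  refine ⟨max (2 * s + ε / s) (1 - ε ^ 2 / exp (sixthMomentConst p)), max_lt ?_ ?_, ?_⟩
  · rw [show ε / s = (1 - 2 * s) / 2 by rw [hεdef]; field_simp]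
    linarith
  · linarith [show 0 < ε ^ 2 / exp (sixthMomentConst p) by positivity]
  intro n _ l hl
  by_cases h : ∃ j, 1 - ε ≤ l j ^ 2
  · obtain ⟨j₀, hj₀⟩ := h
    have hε' : ε ≤ 3 / 4 := by rw [hεdef]; nlinarith [sq_nonneg (4 * s - 1)]
    exact (expAbsSum_le_of_le_sq hp hp1 hl hε' hj₀).trans (le_max_left _ _)
  · push Not at h
    exact (expAbsSum_le_of_forall_sq_le (by linarith) hp1 hl hε.le fun j => (h j).le).trans
      (le_max_right _ _)
end

section
/- There exists ε > 0, independent of n, such that for p = 3/4 (so each ξ_j takes the value 1/√3 with probability 3/4 and the value −√3 with probability 1/4), every n ≥ 1, and every λ ∈ ℝ^n with ∑_{j=1}^n λ_j² = 1 and max_{1≤k≤n} λ_k² ≤ 0.99, one has 𝔼| ∑_{j=1}^n λ_j ξ_j | ≤ 1 − ε². -/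
/-! Write `S = ∑ λⱼ ξⱼ`. As `𝔼 S² = 1`, we have `𝔼|S| = 1 - 𝔼(|S| - 1)² / 2`, and Cauchy–Schwarz
applied to `(S² - 1)² = (|S| - 1) · (|S| - 1)(|S| + 1)²` gives
`(𝔼 S⁴ - 1)² ≤ 𝔼(|S| - 1)² · (2 𝔼 S⁶ + 2)`. Peeling off one coordinate at a time and expanding
binomially, `𝔼 S⁴ = 3 - (2/3) ∑ λⱼ⁴ ≥ 7/3` (here `max λⱼ² ≤ 0.99` enters) and `𝔼 S⁶ ≤ 20`,
so `𝔼|S| ≤ 1 - (4/3)² / 84 < 1 - 1/10²`. -/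

open Finset

namespace Khinchine

section Expectation

variable {Ω : Type*} [Fintype Ω] {μ : Ω → ℝ}

def expectation (μ f : Ω → ℝ) : ℝ := ∑ ω, μ ω * f ω

lemma expectation_add (f g : Ω → ℝ) :
    expectation μ (fun ω => f ω + g ω) = expectation μ f + expectation μ g := by
  simp only [expectation, mul_add, sum_add_distrib]

lemma expectation_sub (f g : Ω → ℝ) :
    expectation μ (fun ω => f ω - g ω) = expectation μ f - expectation μ g := by
  simp only [expectation, mul_sub, sum_sub_distrib]

lemma expectation_const_mul (c : ℝ) (f : Ω → ℝ) :
    expectation μ (fun ω => c * f ω) = c * expectation μ f := by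
  simp only [expectation, mul_sum, mul_left_comm]

lemma expectation_sum {ι : Type*} (s : Finset ι) (f : ι → Ω → ℝ) :
    expectation μ (fun ω => ∑ i ∈ s, f i ω) = ∑ i ∈ s, expectation μ (f i) := by
  simp only [expectation, mul_sum]
  exact sum_comm

lemma expectation_const (hμ : ∑ ω, μ ω = 1) (c : ℝ) : expectation μ (fun _ => c) = c := by
  rw [expectation, ← sum_mul, hμ, one_mul]

lemma expectation_mono (hμ : ∀ ω, 0 ≤ μ ω) {f g : Ω → ℝ} (h : ∀ ω, f ω ≤ g ω) :
    expectation μ f ≤ expectation μ g :=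
  sum_le_sum fun ω _ => mul_le_mul_of_nonneg_left (h ω) (hμ ω)

lemma expectation_mul_sq_le (hμ : ∀ ω, 0 ≤ μ ω) (f g : Ω → ℝ) :
    expectation μ (fun ω => f ω * g ω) ^ 2
      ≤ expectation μ (fun ω => f ω ^ 2) * expectation μ (fun ω => g ω ^ 2) :=
  sum_sq_le_sum_mul_sum_of_sq_le_mul _ (fun ω _ => mul_nonneg (hμ ω) (sq_nonneg _))
    (fun ω _ => mul_nonneg (hμ ω) (sq_nonneg _)) fun ω _ => le_of_eq (by ring)

theorem expectation_abs_le (hμ : ∀ ω, 0 ≤ μ ω) (hμ1 : ∑ ω, μ ω = 1) {S : Ω → ℝ} {v K : ℝ}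
    (h2 : expectation μ (fun ω => S ω ^ 2) = 1) (hv : 0 ≤ v)
    (h4 : v ≤ expectation μ (fun ω => S ω ^ 4) - 1)
    (h6 : expectation μ (fun ω => S ω ^ 6) ≤ K) :
    expectation μ (fun ω => |S ω|) ≤ 1 - v ^ 2 / (4 * (K + 1)) := by
  have hA : expectation μ (fun ω => (|S ω| - 1) ^ 2)
      = 2 - 2 * expectation μ (fun ω => |S ω|) := by
    have h : (fun ω => (|S ω| - 1) ^ 2) = fun ω => S ω ^ 2 - 2 * |S ω| + 1 :=
      funext fun ω => by rw [← sq_abs (S ω)]; ring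
    rw [h, expectation_add, expectation_sub, expectation_const_mul, expectation_const hμ1, h2]
    ring
  have hA0 : 0 ≤ expectation μ (fun ω => (|S ω| - 1) ^ 2) := by
    simpa [expectation_const hμ1] using
      expectation_mono hμ (f := fun _ => 0) fun ω => sq_nonneg (|S ω| - 1)
  have hV : expectation μ (fun ω => S ω ^ 4) - 1
      = expectation μ (fun ω => (|S ω| - 1) * ((|S ω| - 1) * (|S ω| + 1) ^ 2)) := by
    have h : (fun ω => (|S ω| - 1) * ((|S ω| - 1) * (|S ω| + 1) ^ 2))
        = fun ω => S ω ^ 4 - 2 * S ω ^ 2 + 1 :=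
      funext fun ω => by rw [← (by decide : Even 4).pow_abs, ← sq_abs (S ω)]; ring
    rw [h, expectation_add, expectation_sub, expectation_const_mul, expectation_const hμ1, h2]
    ring
  have hCS := hV ▸ expectation_mul_sq_le hμ (fun ω => |S ω| - 1)
    (fun ω => (|S ω| - 1) * (|S ω| + 1) ^ 2)
  have hW := expectation_mono hμ (g := fun ω => 2 * S ω ^ 6 + 2)
    (f := fun ω => ((|S ω| - 1) * (|S ω| + 1) ^ 2) ^ 2) fun ω => by
      have h := abs_nonneg (S ω)
      rw [← (by decide : Even 6).pow_abs]
      nlinarith [mul_nonneg (sq_nonneg (|S ω| ^ 2 - 1)) (sq_nonneg (|S ω| - 1)),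
        pow_nonneg h 4, pow_nonneg h 2]
  rw [expectation_add, expectation_const_mul, expectation_const hμ1] at hW
  have hS6 : 0 ≤ expectation μ (fun ω => S ω ^ 6) := by
    simpa [expectation_const hμ1] using
      expectation_mono hμ (f := fun _ => 0) fun ω => (even_two_mul 3).pow_nonneg (S ω)
  rw [le_sub_comm, div_le_iff₀ (by linarith)]
  nlinarith [mul_le_mul_of_nonneg_left hW hA0, mul_le_mul h4 h4 hv (hv.trans h4)]

end Expectation

section PowerSums

variable {ι : Type*} [Fintype ι]

lemma sum_pow_four_le_sq_sum_sq (l : ι → ℝ) : ∑ j, l j ^ 4 ≤ (∑ j, l j ^ 2) ^ 2 := by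
  simpa only [← pow_mul] using sum_sq_le_sq_sum_of_nonneg (s := univ) fun j _ => sq_nonneg (l j)

lemma sum_pow_four_le_mul_sum_sq {l : ι → ℝ} {c : ℝ} (h : ∀ j, l j ^ 2 ≤ c) :
    ∑ j, l j ^ 4 ≤ c * ∑ j, l j ^ 2 := by
  rw [mul_sum]
  exact sum_le_sum fun j _ => by nlinarith [mul_le_mul_of_nonneg_right (h j) (sq_nonneg (l j))]

lemma pow_three_mul_sum_pow_three_le (c : ℝ) (l : ι → ℝ) :
    c ^ 3 * ∑ j, l j ^ 3 ≤ (c ^ 4 * ∑ j, l j ^ 2 + c ^ 2 * (∑ j, l j ^ 2) ^ 2) / 2 := by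
  have h : ∀ j, c ^ 3 * l j ^ 3 ≤ (c ^ 4 * l j ^ 2 + c ^ 2 * l j ^ 4) / 2 := fun j => by
    nlinarith [mul_nonneg (sq_nonneg (c * l j)) (sq_nonneg (c - l j))]
  calc c ^ 3 * ∑ j, l j ^ 3 ≤ ∑ j, (c ^ 4 * l j ^ 2 + c ^ 2 * l j ^ 4) / 2 := by
        rw [mul_sum]; exact sum_le_sum fun j _ => h j
    _ = (c ^ 4 * ∑ j, l j ^ 2 + c ^ 2 * ∑ j, l j ^ 4) / 2 := by
        rw [← sum_div, sum_add_distrib, mul_sum, mul_sum]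
    _ ≤ _ := by gcongr; exact sum_pow_four_le_sq_sum_sq l

end PowerSums

section Product

variable {α : Type*} {w : α → ℝ}

def piWeight (w : α → ℝ) {n : ℕ} (σ : Fin n → α) : ℝ := ∏ j, w (σ j)

def weightedSum (x : α → ℝ) {n : ℕ} (l : Fin n → ℝ) (σ : Fin n → α) : ℝ :=
  ∑ j, l j * x (σ j)

lemma piWeight_nonneg (hw : ∀ a, 0 ≤ w a) {n : ℕ} (σ : Fin n → α) : 0 ≤ piWeight w σ :=
  prod_nonneg fun j _ => hw (σ j)

variable [Fintype α]

lemma sum_piWeight (hw1 : ∑ a, w a = 1) (n : ℕ) : ∑ σ : Fin n → α, piWeight w σ = 1 := by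
  simp only [piWeight, ← Fintype.prod_sum, hw1, prod_const_one]

lemma expectation_piWeight_succ {n : ℕ} (f : (Fin (n + 1) → α) → ℝ) :
    expectation (piWeight w) f
      = ∑ a, w a * expectation (piWeight w) (fun σ => f (Fin.cons a σ)) := by
  rw [expectation, ← (Fin.consEquiv fun _ => α).sum_comp, Fintype.sum_prod_type]
  refine sum_congr rfl fun a _ => ?_
  rw [expectation, mul_sum]
  refine sum_congr rfl fun σ _ => ?_
  simp only [Fin.consEquiv, Equiv.coe_fn_mk, piWeight, Fin.prod_univ_succ, Fin.cons_zero,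
    Fin.cons_succ]
  ring

variable (x : α → ℝ)

lemma expectation_weightedSum_cons_pow {n : ℕ} (c : ℝ) (l : Fin n → ℝ) (k : ℕ) :
    expectation (piWeight w) (fun σ => weightedSum x (Fin.cons c l) σ ^ k)
      = ∑ i ∈ range (k + 1), c ^ i * expectation w (fun a => x a ^ i)
          * expectation (piWeight w) (fun σ => weightedSum x l σ ^ (k - i)) * k.choose i := by
  rw [expectation_piWeight_succ]
  simp only [weightedSum, Fin.sum_univ_succ, Fin.cons_zero, Fin.cons_succ, add_pow,
    expectation_sum, mul_sum]
  rw [Finset.sum_comm]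
  refine sum_congr rfl fun i _ => ?_
  simp only [expectation, sum_mul, mul_sum]
  rw [Finset.sum_comm]
  refine sum_congr rfl fun σ _ => sum_congr rfl fun a _ => ?_
  ring

lemma expectation_weightedSum (hw1 : ∑ a, w a = 1) (hx1 : expectation w x = 0) {n : ℕ}
    (l : Fin n → ℝ) : expectation (piWeight w) (fun σ => weightedSum x l σ) = 0 := by
  induction l using Fin.consInduction with
  | elim0 => simp [expectation, weightedSum]
  | cons c l ih =>
    simpa [sum_range_succ, ih, hx1, expectation_const hw1] using
      expectation_weightedSum_cons_pow (w := w) x c l 1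

lemma expectation_weightedSum_sq (hw1 : ∑ a, w a = 1) (hx1 : expectation w x = 0)
    (hx2 : expectation w (fun a => x a ^ 2) = 1) {n : ℕ} (l : Fin n → ℝ) :
    expectation (piWeight w) (fun σ => weightedSum x l σ ^ 2) = ∑ j, l j ^ 2 := by
  induction l using Fin.consInduction with
  | elim0 => simp [expectation, weightedSum]
  | cons c l ih =>
    rw [expectation_weightedSum_cons_pow]
    simp only [sum_range_succ, sum_range_zero, Nat.choose, Nat.reduceAdd, Nat.reduceSub,
      Nat.cast_ofNat, Nat.cast_one, pow_zero, pow_one, expectation_const hw1,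
      expectation_const (sum_piWeight hw1 _), hx1, hx2, Fin.sum_univ_succ, Fin.cons_zero,
      Fin.cons_succ, ih]
    ring

lemma expectation_weightedSum_pow_three (hw1 : ∑ a, w a = 1) (hx1 : expectation w x = 0)
    {n : ℕ} (l : Fin n → ℝ) :
    expectation (piWeight w) (fun σ => weightedSum x l σ ^ 3)
      = expectation w (fun a => x a ^ 3) * ∑ j, l j ^ 3 := by
  induction l using Fin.consInduction with
  | elim0 => simp [expectation, weightedSum]
  | cons c l ih =>
    rw [expectation_weightedSum_cons_pow]
    simp only [sum_range_succ, sum_range_zero, Nat.choose, Nat.reduceAdd, Nat.reduceSub,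
      Nat.cast_ofNat, Nat.cast_one, pow_zero, pow_one, expectation_const hw1,
      expectation_const (sum_piWeight hw1 _), hx1, Fin.sum_univ_succ, Fin.cons_zero,
      Fin.cons_succ, ih, expectation_weightedSum x hw1 hx1]
    ring

lemma expectation_weightedSum_pow_four (hw1 : ∑ a, w a = 1) (hx1 : expectation w x = 0)
    (hx2 : expectation w (fun a => x a ^ 2) = 1) {n : ℕ} (l : Fin n → ℝ) :
    expectation (piWeight w) (fun σ => weightedSum x l σ ^ 4)
      = 3 * (∑ j, l j ^ 2) ^ 2 + (expectation w (fun a => x a ^ 4) - 3) * ∑ j, l j ^ 4 := by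
  induction l using Fin.consInduction with
  | elim0 => simp [expectation, weightedSum]
  | cons c l ih =>
    rw [expectation_weightedSum_cons_pow]
    simp only [sum_range_succ, sum_range_zero, Nat.choose, Nat.reduceAdd, Nat.reduceSub,
      Nat.cast_ofNat, Nat.cast_one, pow_zero, pow_one, expectation_const hw1,
      expectation_const (sum_piWeight hw1 _), hx1, hx2, Fin.sum_univ_succ, Fin.cons_zero,
      Fin.cons_succ, ih, expectation_weightedSum x hw1 hx1,
      expectation_weightedSum_sq x hw1 hx1 hx2]
    ring

lemma expectation_weightedSum_pow_four_le (hw1 : ∑ a, w a = 1) (hx1 : expectation w x = 0)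
    (hx2 : expectation w (fun a => x a ^ 2) = 1) {n : ℕ} (l : Fin n → ℝ) :
    expectation (piWeight w) (fun σ => weightedSum x l σ ^ 4)
      ≤ max 3 (expectation w (fun a => x a ^ 4)) * (∑ j, l j ^ 2) ^ 2 := by
  rw [expectation_weightedSum_pow_four x hw1 hx1 hx2]
  have hq := sum_pow_four_le_sq_sum_sq l
  have hq0 : 0 ≤ ∑ j, l j ^ 4 := sum_nonneg fun j _ => by positivity
  nlinarith [le_max_left 3 (expectation w (fun a => x a ^ 4)),
    le_max_right 3 (expectation w (fun a => x a ^ 4))]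

-- The conditions on `C` compare `𝔼 (c ξ + S)⁶` with `C (c² + T)³` coefficientwise in
-- `c⁶, c⁴ T, c² T²`; the cross term `20 c³ 𝔼 ξ³ 𝔼 S³` is absorbed by AM–GM.
lemma expectation_weightedSum_pow_six_le (hw1 : ∑ a, w a = 1) (hx1 : expectation w x = 0)
    (hx2 : expectation w (fun a => x a ^ 2) = 1) {C : ℝ}
    (h6 : expectation w (fun a => x a ^ 6) ≤ C)
    (h4 : 15 * max 3 (expectation w (fun a => x a ^ 4))
      + 10 * expectation w (fun a => x a ^ 3) ^ 2 ≤ 3 * C)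
    {n : ℕ} (l : Fin n → ℝ) :
    expectation (piWeight w) (fun σ => weightedSum x l σ ^ 6) ≤ C * (∑ j, l j ^ 2) ^ 3 := by
  induction l using Fin.consInduction with
  | elim0 => simp [expectation, weightedSum]
  | cons c l ih =>
    have hT : 0 ≤ ∑ j, l j ^ 2 := sum_nonneg fun j _ => sq_nonneg _
    have hA4 := mul_le_mul_of_nonneg_left
      (expectation_weightedSum_pow_four_le x hw1 hx1 hx2 l) (sq_nonneg c)
    have hm4 := mul_le_mul_of_nonneg_right (le_max_right 3 (expectation w (fun a => x a ^ 4)))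
      (mul_nonneg (pow_nonneg (sq_nonneg c) 2) hT)
    have hm6 := mul_le_mul_of_nonneg_right h6 (pow_nonneg (sq_nonneg c) 3)
    have hA3 := mul_le_mul_of_nonneg_left (pow_three_mul_sum_pow_three_le c l)
      (sq_nonneg (expectation w (fun a => x a ^ 3)))
    have hC := mul_le_mul_of_nonneg_right h4 (add_nonneg
      (mul_nonneg (pow_nonneg (sq_nonneg c) 2) hT) (mul_nonneg (sq_nonneg c) (pow_nonneg hT 2)))
    rw [expectation_weightedSum_cons_pow]
    simp only [sum_range_succ, sum_range_zero, Nat.choose, Nat.reduceAdd, Nat.reduceSub,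
      Nat.cast_ofNat, Nat.cast_one, pow_zero, pow_one, expectation_const hw1,
      expectation_const (sum_piWeight hw1 _), hx1, hx2, Fin.sum_univ_succ, Fin.cons_zero,
      Fin.cons_succ, expectation_weightedSum x hw1 hx1, expectation_weightedSum_sq x hw1 hx1 hx2,
      expectation_weightedSum_pow_three x hw1 hx1]
    linarith

end Product

lemma wt_nonneg {p : ℝ} (hp0 : 0 ≤ p) (hp1 : p ≤ 1) (b : Bool) : 0 ≤ wt p b := by
  cases b <;> simp [wt] <;> linarith

lemma sum_wt (p : ℝ) : ∑ b, wt p b = 1 := by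
  simp [wt]

lemma sqrt_three_sq : √3 ^ 2 = 3 := Real.sq_sqrt (by norm_num)

lemma xiVal_three_quarters_true : xiVal (3 / 4) true = √3 / 3 := by
  rw [xiVal, if_pos rfl, show (1 - 3 / 4 : ℝ) / (3 / 4) = (√3 / 3) ^ 2 by
    rw [div_pow, sqrt_three_sq]; norm_num, Real.sqrt_sq (by positivity)]

lemma xiVal_three_quarters_false : xiVal (3 / 4) false = -√3 := by
  norm_num [xiVal]

lemma expectation_wt_xiVal_pow (k : ℕ) :
    expectation (wt (3 / 4)) (fun b => xiVal (3 / 4) b ^ k)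
      = 3 / 4 * (√3 / 3) ^ k + 1 / 4 * (-√3) ^ k := by
  rw [expectation, Fintype.sum_bool, xiVal_three_quarters_true, xiVal_three_quarters_false]
  norm_num [wt]

lemma expectation_wt_xiVal : expectation (wt (3 / 4)) (xiVal (3 / 4)) = 0 := by
  have h := expectation_wt_xiVal_pow 1
  simp only [pow_one] at h
  rw [h]
  ring

lemma expectation_wt_xiVal_sq :
    expectation (wt (3 / 4)) (fun b => xiVal (3 / 4) b ^ 2) = 1 := by
  rw [expectation_wt_xiVal_pow]
  linear_combination 1 / 3 * sqrt_three_sq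

lemma expectation_wt_xiVal_pow_three_sq :
    expectation (wt (3 / 4)) (fun b => xiVal (3 / 4) b ^ 3) ^ 2 = 4 / 3 := by
  rw [expectation_wt_xiVal_pow]
  linear_combination 4 / 81 * (√3 ^ 4 + 3 * √3 ^ 2 + 9) * sqrt_three_sq

lemma expectation_wt_xiVal_pow_four :
    expectation (wt (3 / 4)) (fun b => xiVal (3 / 4) b ^ 4) = 7 / 3 := by
  rw [expectation_wt_xiVal_pow]
  linear_combination 7 / 27 * (√3 ^ 2 + 3) * sqrt_three_sq

lemma expectation_wt_xiVal_pow_six :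
    expectation (wt (3 / 4)) (fun b => xiVal (3 / 4) b ^ 6) = 61 / 9 := by
  rw [expectation_wt_xiVal_pow]
  linear_combination 61 / 243 * (√3 ^ 4 + 3 * √3 ^ 2 + 9) * sqrt_three_sq

end Khinchine

open Khinchine

/-- For `p = 3/4` (so each `ξ_j` takes the value `1/√3` with probability `3/4` and
`−√3` with probability `1/4`), there is a dimension-free `ε > 0` such that for every
`n ≥ 1` and every unit vector `λ ∈ ℝ^n` with `max_k λ_k² ≤ 0.99` one has
`𝔼|∑ λ_j ξ_j| ≤ 1 − ε²`. -/
theorem khinchine_deficit_spread_case :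
    ∃ ε > (0 : ℝ),
      ∀ n : ℕ, 1 ≤ n → ∀ l : Fin n → ℝ, (∑ j, (l j) ^ 2) = 1 →
        (∀ k, (l k) ^ 2 ≤ 0.99) →
        expAbsSum (3 / 4) n l ≤ 1 - ε ^ 2 := by
  refine ⟨1 / 10, by norm_num, fun n _ l hl hmax => ?_⟩
  have hw1 := sum_wt (3 / 4)
  have hx1 := expectation_wt_xiVal
  have hx2 := expectation_wt_xiVal_sq
  have h2 := (expectation_weightedSum_sq _ hw1 hx1 hx2 l).trans hl
  have h4 : 4 / 3 ≤ expectation (piWeight (wt (3 / 4)))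
      (fun σ => weightedSum (xiVal (3 / 4)) l σ ^ 4) - 1 := by
    have hq := sum_pow_four_le_mul_sum_sq hmax
    rw [expectation_weightedSum_pow_four _ hw1 hx1 hx2, hl, expectation_wt_xiVal_pow_four]
    linarith
  have h6 : expectation (piWeight (wt (3 / 4)))
      (fun σ => weightedSum (xiVal (3 / 4)) l σ ^ 6) ≤ 20 := by
    simpa [hl] using expectation_weightedSum_pow_six_le _ hw1 hx1 hx2 (C := 20)
      (by rw [expectation_wt_xiVal_pow_six]; norm_num)
      (by rw [expectation_wt_xiVal_pow_four, expectation_wt_xiVal_pow_three_sq]; norm_num) l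
  calc expAbsSum (3 / 4) n l
      = expectation (piWeight (wt (3 / 4))) (fun σ => |weightedSum (xiVal (3 / 4)) l σ|) := rfl
    _ ≤ 1 - (4 / 3) ^ 2 / (4 * (20 + 1)) :=
      expectation_abs_le (piWeight_nonneg (wt_nonneg (by norm_num) (by norm_num)))
        (sum_piWeight hw1 n) h2 (by norm_num) h4 h6
    _ ≤ 1 - (1 / 10) ^ 2 := by norm_num
end

section
/- For every n ≥ 1, every g : {−1,1}^n → ℝ, and every t > 0 one has ‖∇(P_t g)‖_∞ ≤ (e^{−t} / √(1 − e^{−2t})) · ‖g‖_∞. -/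
/-- Expectation with respect to the uniform probability measure on the Hamming cube
`{-1,1}^n`, encoded as `Fin n → Bool`. -/
noncomputable def cubeE {n : ℕ} (f : (Fin n → Bool) → ℝ) : ℝ :=
  (∑ x : Fin n → Bool, f x) / 2 ^ n

/-- The `j`-th discrete partial derivative on the Hamming cube. -/
noncomputable def pderiv {n : ℕ} (j : Fin n) (f : (Fin n → Bool) → ℝ)
    (x : Fin n → Bool) : ℝ :=
  (f (Function.update x j true) - f (Function.update x j false)) / 2

/-- The gradient length `|∇f|(x) = (∑_j (∂_j f(x))²)^{1/2}`. -/
noncomputable def gradLen {n : ℕ} (f : (Fin n → Bool) → ℝ) (x : Fin n → Bool) : ℝ :=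
  Real.sqrt (∑ j, (pderiv j f x) ^ 2)

/-- The sup norm `‖f‖_∞ = max_x |f(x)|` on the Hamming cube. -/
noncomputable def supNorm {n : ℕ} (f : (Fin n → Bool) → ℝ) : ℝ :=
  ⨆ x : Fin n → Bool, |f x|

/-- The coordinate value `x_i = ±1` of a Boolean-encoded cube point. -/
def chi (b : Bool) : ℝ := if b then 1 else -1

/-- The Walsh character `x^S = ∏_{i∈S} x_i`. -/
noncomputable def walsh {n : ℕ} (S : Finset (Fin n)) (x : Fin n → Bool) : ℝ :=
  ∏ i ∈ S, chi (x i)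

/-- The Fourier–Walsh coefficient `f̂(S) = 𝔼[f · x^S]`. -/
noncomputable def walshCoeff {n : ℕ} (f : (Fin n → Bool) → ℝ)
    (S : Finset (Fin n)) : ℝ :=
  cubeE (fun x => f x * walsh S x)

/-- The heat semigroup on the Hamming cube: `P_t f = ∑_S e^{−t|S|} f̂(S) x^S`. -/
noncomputable def heat {n : ℕ} (t : ℝ) (f : (Fin n → Bool) → ℝ)
    (x : Fin n → Bool) : ℝ :=
  ∑ S : Finset (Fin n), Real.exp (-t * S.card) * walshCoeff f S * walsh S x

/-! Write `ρ = e^{-t}`. Then `P_t g(x) = 𝔼_y[g(y) K(x,y)]` for the Mehler kernel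
`K(x,y) = ∏ᵢ (1 + ρ xᵢ yᵢ)`, and `(1 - ρ²) ∂ⱼ P_t g(x) = ρ 𝔼_y[K(x,y) g(y) (yⱼ - ρ xⱼ)]`.
Under the probability density `K(x,·)` the coordinates `yᵢ` are independent with mean `ρ xᵢ` and
variance `1 - ρ²`, so the functions `yⱼ - ρ xⱼ` are orthogonal in `L²(K(x,·))` with squared norm
`1 - ρ²`. Bessel's inequality then gives
`(1 - ρ²)² |∇P_t g|²(x) ≤ ρ² (1 - ρ²) 𝔼_y[K(x,y) g(y)²] ≤ ρ² (1 - ρ²) ‖g‖²_∞`. -/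

open Finset

theorem sum_sq_weighted_inner_le_of_orthogonal {ι Y : Type*} [Fintype ι] [DecidableEq ι]
    [Fintype Y] (w g : Y → ℝ) (Z : ι → Y → ℝ) (hw : ∀ y, 0 ≤ w y) {c : ℝ} (hc : 0 < c)
    (horth : ∀ j k, ∑ y, w y * Z j y * Z k y = if j = k then c else 0) :
    ∑ j, (∑ y, w y * g y * Z j y) ^ 2 ≤ c * ∑ y, w y * g y ^ 2 := by
  have hsqrt_w (y : Y) : √(w y) * √(w y) = w y := Real.mul_self_sqrt (hw y)
  set v : ι → EuclideanSpace ℝ Y :=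
    fun j => WithLp.toLp 2 fun y => √(w y) * Z j y / √c
  have hv : Orthonormal ℝ v := by
    rw [orthonormal_iff_ite]
    intro j k
    simp only [v, PiLp.inner_apply, RCLike.inner_apply, conj_trivial]
    calc ∑ y, √(w y) * Z k y / √c * (√(w y) * Z j y / √c)
        = (∑ y, w y * Z j y * Z k y) / (√c * √c) := by
          rw [sum_div]
          refine sum_congr rfl fun y _ => ?_
          linear_combination Z j y * Z k y / (√c * √c) * hsqrt_w y
      _ = if j = k then 1 else 0 := by
          rw [horth, Real.mul_self_sqrt hc.le]
          split_ifs <;> simp [hc.ne']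
  have bessel := hv.sum_inner_products_le (s := univ) (WithLp.toLp 2 fun y => √(w y) * g y)
  simp only [v, PiLp.inner_apply, RCLike.inner_apply, conj_trivial, EuclideanSpace.norm_sq_eq,
    Real.norm_eq_abs, sq_abs] at bessel
  calc ∑ j, (∑ y, w y * g y * Z j y) ^ 2
      = c * ∑ j, (∑ y, √(w y) * g y * (√(w y) * Z j y / √c)) ^ 2 := by
        rw [mul_sum]
        refine sum_congr rfl fun j _ => ?_
        have hinner : ∑ y, √(w y) * g y * (√(w y) * Z j y / √c)
            = (∑ y, w y * g y * Z j y) / √c := by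
          rw [sum_div]
          refine sum_congr rfl fun y _ => ?_
          linear_combination g y * Z j y / √c * hsqrt_w y
        rw [hinner, div_pow, Real.sq_sqrt hc.le]
        field_simp
    _ ≤ c * ∑ y, (√(w y) * g y) ^ 2 := by gcongr
    _ = c * ∑ y, w y * g y ^ 2 := by
        simp_rw [mul_pow, Real.sq_sqrt (hw _)]

lemma chi_true : chi true = 1 := rfl

lemma chi_false : chi false = -1 := rfl

noncomputable def heatKernel {n : ℕ} (ρ : ℝ) (x y : Fin n → Bool) : ℝ :=
  ∏ i, (1 + ρ * chi (x i) * chi (y i))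

lemma heatKernel_eq_sum_walsh {n : ℕ} (ρ : ℝ) (x y : Fin n → Bool) :
    heatKernel ρ x y = ∑ S : Finset (Fin n), ρ ^ S.card * walsh S x * walsh S y := by
  simp only [heatKernel, mul_assoc, prod_one_add, powerset_univ, walsh, prod_mul_distrib,
    prod_const]

lemma heat_eq_cubeE_heatKernel {n : ℕ} (t : ℝ) (g : (Fin n → Bool) → ℝ) :
    heat t g = fun x => cubeE fun y => g y * heatKernel (Real.exp (-t)) x y := by
  ext x
  simp only [heat, walshCoeff, cubeE, heatKernel_eq_sum_walsh, mul_sum, sum_div]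
  rw [sum_comm]
  refine sum_congr rfl fun S _ => ?_
  rw [sum_mul]
  have hexp : Real.exp (-t * S.card) = Real.exp (-t) ^ S.card := by
    rw [mul_comm, Real.exp_nat_mul]
  refine sum_congr rfl fun y _ => ?_
  rw [hexp]
  ring

lemma pderiv_cubeE {n m : ℕ} (j : Fin n) (F : (Fin n → Bool) → (Fin m → Bool) → ℝ)
    (x : Fin n → Bool) :
    pderiv j (fun x => cubeE (F x)) x = cubeE fun y => pderiv j (F · y) x := by
  simp only [pderiv, cubeE]
  rw [← sub_div, ← sum_sub_distrib, ← sum_div, div_div, div_div, mul_comm]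

lemma pderiv_const_mul {n : ℕ} (j : Fin n) (c : ℝ) (f : (Fin n → Bool) → ℝ)
    (x : Fin n → Bool) : pderiv j (fun x => c * f x) x = c * pderiv j f x := by
  simp only [pderiv]
  ring

lemma heatKernel_update {n : ℕ} (ρ : ℝ) (x y : Fin n → Bool) (j : Fin n) (b : Bool) :
    heatKernel ρ (Function.update x j b) y
      = (1 + ρ * chi b * chi (y j)) * ∏ i ∈ univ.erase j, (1 + ρ * chi (x i) * chi (y i)) := by
  rw [heatKernel, ← mul_prod_erase univ _ (mem_univ j), Function.update_self]
  congr 1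
  exact prod_congr rfl fun i hi => by rw [Function.update_of_ne (ne_of_mem_erase hi)]

lemma pderiv_heatKernel {n : ℕ} (ρ : ℝ) (x y : Fin n → Bool) (j : Fin n) :
    (1 - ρ ^ 2) * pderiv j (heatKernel ρ · y) x
      = ρ * heatKernel ρ x y * (chi (y j) - ρ * chi (x j)) := by
  rw [pderiv, heatKernel_update, heatKernel_update, heatKernel,
    ← mul_prod_erase univ _ (mem_univ j)]
  cases x j <;> cases y j <;> simp only [chi_true, chi_false] <;> ring

lemma sum_heatKernel_mul_prod {n : ℕ} (ρ : ℝ) (x : Fin n → Bool) (h : Fin n → Bool → ℝ) :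
    ∑ y, heatKernel ρ x y * ∏ i, h i (y i) = ∏ i, ∑ b, (1 + ρ * chi (x i) * chi b) * h i b := by
  simp only [heatKernel, ← prod_mul_distrib, Fintype.prod_sum]

lemma sum_one_add_mul_chi_mul_chi (ρ : ℝ) (a : Bool) : ∑ b, (1 + ρ * chi a * chi b) = 2 := by
  cases a <;> simp only [Fintype.sum_bool, chi_true, chi_false] <;> ring

lemma sum_one_add_mul_chi_mul_chi_mul_sub (ρ : ℝ) (a : Bool) :
    ∑ b, (1 + ρ * chi a * chi b) * (chi b - ρ * chi a) = 0 := by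
  cases a <;> simp only [Fintype.sum_bool, chi_true, chi_false] <;> ring

lemma sum_one_add_mul_chi_mul_chi_mul_sub_sq (ρ : ℝ) (a : Bool) :
    ∑ b, (1 + ρ * chi a * chi b) * (chi b - ρ * chi a) ^ 2 = 2 * (1 - ρ ^ 2) := by
  cases a <;> simp only [Fintype.sum_bool, chi_true, chi_false] <;> ring

lemma heatKernel_nonneg {n : ℕ} {ρ : ℝ} (hρ : |ρ| ≤ 1) (x y : Fin n → Bool) :
    0 ≤ heatKernel ρ x y :=
  prod_nonneg fun i _ => by
    cases x i <;> cases y i <;> simp only [chi_true, chi_false] <;> linarith [abs_le.1 hρ]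

lemma sum_heatKernel {n : ℕ} (ρ : ℝ) (x : Fin n → Bool) : ∑ y, heatKernel ρ x y = 2 ^ n := by
  simpa only [prod_const_one, mul_one, sum_one_add_mul_chi_mul_chi, prod_const, card_univ,
    Fintype.card_fin] using sum_heatKernel_mul_prod ρ x fun _ _ => 1

lemma sum_heatKernel_mul_centered_mul_centered {n : ℕ} (ρ : ℝ) (x : Fin n → Bool)
    (j k : Fin n) :
    ∑ y, heatKernel ρ x y * (chi (y j) - ρ * chi (x j)) * (chi (y k) - ρ * chi (x k))
      = if j = k then 2 ^ n * (1 - ρ ^ 2) else 0 := by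
  have hprod (y : Fin n → Bool) :
      (chi (y j) - ρ * chi (x j)) * (chi (y k) - ρ * chi (x k))
        = ∏ i, (if i = j then chi (y i) - ρ * chi (x i) else 1) *
            (if i = k then chi (y i) - ρ * chi (x i) else 1) := by
    rw [prod_mul_distrib, prod_ite_eq', prod_ite_eq', if_pos (mem_univ j), if_pos (mem_univ k)]
  simp_rw [mul_assoc, hprod]
  rw [sum_heatKernel_mul_prod ρ x fun i b =>
    (if i = j then chi b - ρ * chi (x i) else 1) * (if i = k then chi b - ρ * chi (x i) else 1)]
  split_ifs with hjk
  · subst hjk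
    have hfactor (i : Fin n) : ∑ b, (1 + ρ * chi (x i) * chi b) *
        ((if i = j then chi b - ρ * chi (x i) else 1) *
          (if i = j then chi b - ρ * chi (x i) else 1))
        = 2 * if i = j then 1 - ρ ^ 2 else 1 := by
      split_ifs
      · simp_rw [← sq, sum_one_add_mul_chi_mul_chi_mul_sub_sq]
      · simp_rw [mul_one, sum_one_add_mul_chi_mul_chi]
    simp_rw [hfactor, prod_mul_distrib, prod_const, prod_ite_eq', if_pos (mem_univ j), card_univ,
      Fintype.card_fin]
  · refine prod_eq_zero (mem_univ j) ?_
    simp only [↓reduceIte, hjk, mul_one, sum_one_add_mul_chi_mul_chi_mul_sub]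

lemma one_sub_sq_mul_pderiv_heat {n : ℕ} (t : ℝ) (g : (Fin n → Bool) → ℝ) (x : Fin n → Bool)
    (j : Fin n) :
    (1 - Real.exp (-t) ^ 2) * pderiv j (heat t g) x
      = Real.exp (-t) / 2 ^ n * ∑ y, heatKernel (Real.exp (-t)) x y * g y *
          (chi (y j) - Real.exp (-t) * chi (x j)) := by
  rw [heat_eq_cubeE_heatKernel, pderiv_cubeE, cubeE, mul_div_assoc', mul_sum, div_mul_eq_mul_div,
    mul_sum]
  congr 1
  refine sum_congr rfl fun y _ => ?_
  rw [pderiv_const_mul, mul_left_comm, pderiv_heatKernel]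
  ring

lemma one_sub_sq_mul_sum_sq_pderiv_heat_le {n : ℕ} (g : (Fin n → Bool) → ℝ) {t : ℝ}
    (ht : 0 < t) {M : ℝ} (hM : ∀ y, |g y| ≤ M) (x : Fin n → Bool) :
    (1 - Real.exp (-t) ^ 2) * ∑ j, pderiv j (heat t g) x ^ 2 ≤ Real.exp (-t) ^ 2 * M ^ 2 := by
  set ρ := Real.exp (-t)
  have hρ_pos : 0 < ρ := Real.exp_pos _
  have hρ_lt_one : ρ < 1 := Real.exp_lt_one_iff.2 (neg_lt_zero.2 ht)
  have hρ_abs : |ρ| ≤ 1 := by rw [abs_of_pos hρ_pos]; exact hρ_lt_one.le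
  have hvar : 0 < 1 - ρ ^ 2 := by nlinarith
  have hweighted : ∑ y, heatKernel ρ x y * g y ^ 2 ≤ 2 ^ n * M ^ 2 := by
    rw [← sum_heatKernel ρ x, sum_mul]
    refine sum_le_sum fun y _ => mul_le_mul_of_nonneg_left ?_ (heatKernel_nonneg hρ_abs x y)
    exact sq_le_sq' (abs_le.1 (hM y)).1 (abs_le.1 (hM y)).2
  have hbessel := sum_sq_weighted_inner_le_of_orthogonal (heatKernel ρ x) g
    (fun j y => chi (y j) - ρ * chi (x j)) (heatKernel_nonneg hρ_abs x)
    (by positivity : (0 : ℝ) < 2 ^ n * (1 - ρ ^ 2)) (sum_heatKernel_mul_centered_mul_centered ρ x)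
  refine le_of_mul_le_mul_left ?_ hvar
  calc (1 - ρ ^ 2) * ((1 - ρ ^ 2) * ∑ j, pderiv j (heat t g) x ^ 2)
      = ∑ j, ((1 - ρ ^ 2) * pderiv j (heat t g) x) ^ 2 := by
        rw [mul_sum, mul_sum]
        exact sum_congr rfl fun j _ => by ring
    _ = (ρ / 2 ^ n) ^ 2 *
          ∑ j, (∑ y, heatKernel ρ x y * g y * (chi (y j) - ρ * chi (x j))) ^ 2 := by
        rw [mul_sum]
        exact sum_congr rfl fun j _ => by rw [one_sub_sq_mul_pderiv_heat, mul_pow]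
    _ ≤ (ρ / 2 ^ n) ^ 2 * (2 ^ n * (1 - ρ ^ 2) * (2 ^ n * M ^ 2)) := by
        gcongr
        exact hbessel.trans (by gcongr)
    _ = (1 - ρ ^ 2) * (ρ ^ 2 * M ^ 2) := by
        field_simp

lemma gradLen_heat_le {n : ℕ} (g : (Fin n → Bool) → ℝ) {t : ℝ} (ht : 0 < t) {M : ℝ}
    (hM : ∀ y, |g y| ≤ M) (x : Fin n → Bool) :
    gradLen (heat t g) x ≤ Real.exp (-t) / Real.sqrt (1 - Real.exp (-2 * t)) * M := by
  have hM_nonneg : 0 ≤ M := (abs_nonneg _).trans (hM fun _ => true)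
  have hexp : Real.exp (-2 * t) = Real.exp (-t) ^ 2 := by
    rw [← Real.exp_nat_mul]
    ring_nf
  have hvar : 0 < 1 - Real.exp (-t) ^ 2 := by
    nlinarith [Real.exp_pos (-t), Real.exp_lt_one_iff.2 (neg_lt_zero.2 ht)]
  rw [gradLen, Real.sqrt_le_iff, hexp]
  refine ⟨by positivity, ?_⟩
  rw [mul_pow, div_pow, Real.sq_sqrt hvar.le, div_mul_eq_mul_div, le_div_iff₀ hvar, mul_comm]
  exact one_sub_sq_mul_sum_sq_pderiv_heat_le g ht hM x

theorem grad_heat_sup_bound_general (n : ℕ) (g : (Fin n → Bool) → ℝ)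
    (t : ℝ) (ht : 0 < t) :
    supNorm (gradLen (heat t g))
      ≤ Real.exp (-t) / Real.sqrt (1 - Real.exp (-2 * t)) * supNorm g := by
  refine ciSup_le fun x => ?_
  exact (abs_of_nonneg (Real.sqrt_nonneg _)).trans_le
    (gradLen_heat_le g ht (fun y => le_ciSup (Set.finite_range fun z => |g z|).bddAbove y) x)

/-- For every `n ≥ 1`, every `g : {−1,1}^n → ℝ` and every `t > 0`,
`‖∇(P_t g)‖_∞ ≤ (e^{−t}/√(1 − e^{−2t})) ‖g‖_∞`. -/
theorem grad_heat_sup_bound (n : ℕ) (hn : 1 ≤ n) (g : (Fin n → Bool) → ℝ)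
    (t : ℝ) (ht : 0 < t) :
    supNorm (gradLen (heat t g))
      ≤ Real.exp (-t) / Real.sqrt (1 - Real.exp (-2 * t)) * supNorm g :=
  grad_heat_sup_bound_general n g t ht
end

section
/- For odd n, let f_n : {−1,1}^n → ℝ be defined by f_n(x) = sign(∑_{j=1}^n x_j) (note ∑ x_j ≠ 0 for odd n). Then 𝔼|∇f_n| = 2^{1−n} · C(n, (n+1)/2) · √((n+1)/2), where C(n,k) is the binomial coefficient, and consequently 𝔼|∇f_n| → 2/√π as n → ∞ through odd values. -/
/-- The majority-type function `f_n(x) = sign(∑_{j=1}^n x_j)` (with `sign 0 = 0`). -/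
noncomputable def signFun (n : ℕ) (x : Fin n → Bool) : ℝ :=
  Real.sign (∑ j, chi (x j))

/-!
Let `k` be the number of coordinates equal to `+1`, so that for `n = 2t + 1` we have
`f_n(x) = sign(2k - n)`, which is `-1` for `k ≤ t` and `1` otherwise. Hence `∂_j f_n(x)` is `1`
when the other `n - 1` coordinates are balanced and `0` otherwise, and `|∇f_n|(x)²` counts these
pivotal coordinates: there are `t + 1` of them when `k ∈ {t, t + 1}` and none otherwise. Summing
over the cube, `𝔼|∇f_n| = 2 √m C(2m, m) / 4^m` with `m = t + 1`, and Wallis' product gives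
`m C(2m, m)² / 16^m → 1/π`.
-/

open Finset Function Filter Topology Real

section TrueCount

variable {ι : Type*} [Fintype ι]

def trueCount (x : ι → Bool) : ℕ := #{j | x j = true}

lemma trueCount_eq_sum (x : ι → Bool) : trueCount x = ∑ j, (x j).toNat := by
  rw [trueCount, card_filter]
  exact sum_congr rfl fun j _ => by cases x j <;> rfl

lemma sum_chi_eq_two_mul_trueCount_sub_card (x : ι → Bool) :
    ∑ j, chi (x j) = 2 * (trueCount x : ℝ) - Fintype.card ι := by
  have h : ∀ b : Bool, chi b = 2 * (if b = true then 1 else 0) - 1 := by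
    intro b; cases b <;> norm_num [chi]
  simp only [h, sum_sub_distrib, ← mul_sum, sum_boole, trueCount]
  simp

variable [DecidableEq ι]

lemma trueCount_update (x : ι → Bool) (j : ι) (b : Bool) :
    trueCount (update x j b) = b.toNat + trueCount (update x j false) := by
  simp only [trueCount_eq_sum, apply_update (fun _ => Bool.toNat),
    sum_update_of_mem (mem_univ j), Bool.toNat_false, zero_add]

lemma trueCount_update_false_add (x : ι → Bool) (j : ι) :
    trueCount (update x j false) + (x j).toNat = trueCount x := by
  rw [add_comm, ← trueCount_update, update_eq_self]

lemma card_filter_trueCount_update_false_eq (x : ι → Bool) (t : ℕ) :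
    #{j | trueCount (update x j false) = t} =
      if trueCount x = t + 1 then t + 1 else if trueCount x = t then Fintype.card ι - t else 0 := by
  have key := trueCount_update_false_add x
  split_ifs with h₁ h₀
  · rw [← h₁, trueCount]
    congr 1
    refine filter_congr fun j _ => ?_
    have := key j
    cases hj : x j <;> simp [hj] at this ⊢ <;> omega
  · have hfalse : #{j | trueCount (update x j false) = t} = #{j | ¬x j = true} := by
      congr 1
      refine filter_congr fun j _ => ?_
      have := key j
      cases hj : x j <;> simp [hj] at this ⊢ <;> omega
    have := card_filter_add_card_filter_not (s := univ) (fun j => x j = true)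
    rw [trueCount] at h₀
    rw [card_univ] at this
    omega
  · refine card_eq_zero.2 (filter_eq_empty_iff.2 fun j _ => ?_)
    have := key j
    cases hj : x j <;> simp [hj] at this ⊢ <;> omega

lemma card_filter_trueCount_eq_choose (r : ℕ) :
    #{x : ι → Bool | trueCount x = r} = (Fintype.card ι).choose r := by
  rw [← card_univ, ← card_powersetCard]
  refine card_bij' (fun x _ => ({j | x j = true} : Finset ι)) (fun s _ j => decide (j ∈ s))
    (fun x hx => ?_) (fun s hs => ?_) (fun x _ => ?_) (fun s _ => ?_)
  · exact mem_powersetCard.2 ⟨subset_univ _, (mem_filter.1 hx).2⟩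
  · refine mem_filter.2 ⟨mem_univ _, ?_⟩
    simpa [trueCount] using (mem_powersetCard.1 hs).2
  · funext j
    simp
  · ext j
    simp

end TrueCount

lemma signFun_eq (t : ℕ) (x : Fin (2 * t + 1) → Bool) :
    signFun (2 * t + 1) x = if trueCount x ≤ t then -1 else 1 := by
  rw [signFun, sum_chi_eq_two_mul_trueCount_sub_card, Fintype.card_fin]
  push_cast
  split_ifs with h
  · have : (trueCount x : ℝ) ≤ t := by exact_mod_cast h
    exact Real.sign_of_neg (by linarith)
  · have : (t : ℝ) + 1 ≤ trueCount x := by exact_mod_cast Nat.succ_le_of_lt (not_le.1 h)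
    exact Real.sign_of_pos (by linarith)

lemma pderiv_signFun (t : ℕ) (x : Fin (2 * t + 1) → Bool) (j : Fin (2 * t + 1)) :
    pderiv j (signFun (2 * t + 1)) x = if trueCount (update x j false) = t then 1 else 0 := by
  rw [pderiv, signFun_eq, signFun_eq, trueCount_update x j true, Bool.toNat_true]
  split_ifs <;> norm_num <;> omega

lemma gradLen_signFun (t : ℕ) (x : Fin (2 * t + 1) → Bool) :
    gradLen (signFun (2 * t + 1)) x =
      if trueCount x = t ∨ trueCount x = t + 1 then √(t + 1) else 0 := by
  have hsum : ∑ j, pderiv j (signFun (2 * t + 1)) x ^ 2 =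
      #{j | trueCount (update x j false) = t} := by
    simp only [pderiv_signFun, ite_pow, one_pow, ne_eq, OfNat.ofNat_ne_zero,
      not_false_eq_true, zero_pow, sum_boole]
  rw [gradLen, hsum, card_filter_trueCount_update_false_eq, Fintype.card_fin,
    show 2 * t + 1 - t = t + 1 by omega]
  split_ifs <;> first | omega | simp

lemma choose_add_choose_succ_eq_centralBinom (t : ℕ) :
    (2 * t + 1).choose t + (2 * t + 1).choose (t + 1) = Nat.centralBinom (t + 1) := by
  rw [Nat.centralBinom_eq_two_mul_choose, show 2 * (t + 1) = 2 * t + 1 + 1 by ring,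
    Nat.choose_succ_succ (2 * t + 1) t]

lemma sum_gradLen_signFun (t : ℕ) :
    ∑ x, gradLen (signFun (2 * t + 1)) x = √(t + 1) * Nat.centralBinom (t + 1) := by
  calc ∑ x, gradLen (signFun (2 * t + 1)) x
      = √(t + 1) * ∑ x : Fin (2 * t + 1) → Bool,
          ((if trueCount x = t then 1 else 0) + (if trueCount x = t + 1 then 1 else 0)) := by
        rw [mul_sum]
        refine sum_congr rfl fun x _ => ?_
        rw [gradLen_signFun]
        split_ifs <;> first | omega | simp
    _ = √(t + 1) * Nat.centralBinom (t + 1) := by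
        rw [sum_add_distrib, sum_boole, sum_boole, card_filter_trueCount_eq_choose,
          card_filter_trueCount_eq_choose, Fintype.card_fin, ← choose_add_choose_succ_eq_centralBinom]
        push_cast
        ring

lemma cubeE_gradLen_signFun (t : ℕ) :
    cubeE (gradLen (signFun (2 * t + 1))) =
      2 * (√(t + 1) * Nat.centralBinom (t + 1) / 4 ^ (t + 1)) := by
  rw [cubeE, sum_gradLen_signFun, show (4 : ℝ) ^ (t + 1) = 2 * 2 ^ (2 * t + 1) by
    rw [show (4 : ℝ) = 2 ^ 2 by norm_num, ← pow_mul]; ring]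
  field_simp

lemma centralBinom_succ_eq_two_mul_choose (t : ℕ) :
    Nat.centralBinom (t + 1) = 2 * (2 * t + 1).choose (t + 1) := by
  rw [← choose_add_choose_succ_eq_centralBinom, Nat.choose_symm_half]
  ring

lemma Real.Wallis.W_eq_four_pow_div_centralBinom (m : ℕ) :
    Real.Wallis.W m = (4 ^ m / Nat.centralBinom m) ^ 2 / (2 * m + 1) := by
  have hfac : (Nat.centralBinom m * m.factorial * m.factorial : ℝ) = (2 * m).factorial := by
    exact_mod_cast two_mul m ▸ Nat.add_choose_mul_factorial_mul_factorial m m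
  rw [Real.Wallis.W_eq_factorial_ratio, ← hfac, show (2 : ℝ) ^ (4 * m) = (4 ^ m) ^ 2 by
    rw [← pow_mul, show (4 : ℝ) = 2 ^ 2 by norm_num, ← pow_mul]; ring_nf]
  have := Nat.centralBinom_pos m
  have := m.factorial_pos
  field_simp

lemma tendsto_sqrt_mul_centralBinom_div_four_pow :
    Tendsto (fun m : ℕ => √m * Nat.centralBinom m / 4 ^ m) atTop (𝓝 (1 / √π)) := by
  have hW : ∀ m : ℕ, √m * Nat.centralBinom m / 4 ^ m = √(m / (2 * m + 1) / Real.Wallis.W m) := by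
    intro m
    have := Nat.centralBinom_pos m
    rw [mul_div_assoc, ← sqrt_sq (by positivity : 0 ≤ (Nat.centralBinom m : ℝ) / 4 ^ m),
      ← sqrt_mul (Nat.cast_nonneg m), Real.Wallis.W_eq_four_pow_div_centralBinom]
    congr 1
    field_simp
  have hlim : Tendsto (fun m : ℕ => (m : ℝ) / (2 * m + 1) / Real.Wallis.W m) atTop
      (𝓝 (1 / 2 / (π / 2))) :=
    Stirling.tendsto_self_div_two_mul_self_add_one.div Real.Wallis.tendsto_W_nhds_pi_div_two
      (by positivity)
  rw [show 1 / 2 / (π / 2) = 1 / π by field_simp] at hlim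
  simpa only [hW, sqrt_div' 1 pi_pos.le, sqrt_one] using hlim.sqrt

/-- For odd `n`, `𝔼|∇f_n| = 2^{1−n}·C(n,(n+1)/2)·√((n+1)/2)` for
`f_n = sign(∑ x_j)`, and consequently `𝔼|∇f_n| → 2/√π` as `n → ∞` through odd
values. -/
theorem grad_norm_of_sign_odd :
    (∀ n : ℕ, Odd n →
      cubeE (gradLen (signFun n))
        = (2 : ℝ) ^ (1 - (n : ℤ)) * (n.choose ((n + 1) / 2)) *
            Real.sqrt (((n : ℝ) + 1) / 2)) ∧
    Filter.Tendsto (fun n : ℕ => cubeE (gradLen (signFun n)))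
      (Filter.atTop ⊓ Filter.principal {n | Odd n})
      (nhds (2 / Real.sqrt Real.pi)) := by
  have half_succ : ∀ t : ℕ, (2 * t + 1 + 1) / 2 = t + 1 := fun t => by omega
  refine ⟨?_, ?_⟩
  · rintro n ⟨t, rfl⟩
    rw [cubeE_gradLen_signFun, centralBinom_succ_eq_two_mul_choose, half_succ,
      zpow_sub₀ two_ne_zero, zpow_one, zpow_natCast, pow_succ, show (4 : ℝ) ^ t = 2 ^ (2 * t) by
        rw [pow_mul]; norm_num]
    push_cast
    rw [show ((2 : ℝ) * t + 1 + 1) / 2 = t + 1 by ring, pow_succ]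
    field_simp
    ring
  · have h := (tendsto_sqrt_mul_centralBinom_div_four_pow.comp
      ((Nat.tendsto_div_const_atTop two_ne_zero).comp (tendsto_add_atTop_nat 1))).const_mul 2
    rw [mul_one_div] at h
    refine (h.mono_left inf_le_left).congr' ?_
    filter_upwards [mem_inf_of_right (mem_principal_self _)] with n ⟨t, ht⟩
    subst ht
    simp only [Function.comp_apply, cubeE_gradLen_signFun, half_succ]
    push_cast
    rfl
end

section
/- For even n, let f_n : {−1,1}^n → ℝ be defined by f_n(x) = sign(∑_{j=1}^n x_j), where sign(0) = 0. Then 𝔼|∇f_n| = 2^{−n−1} · ( C(n, n/2) · √n + 2 · C(n, n/2 + 1) · √(n/2 + 1) ), where C(n,k) is the binomial coefficient, and consequently 𝔼|∇f_n| → (1 + √2)/√(2π) as n → ∞ through even values. -/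
/-!
`signFun n` depends only on the number `k` of `true` coordinates, and flipping one coordinate
moves `k` by one. So for any `f = φ ∘ k` the `k` coordinates equal to `true` each contribute
`(φ k - φ (k - 1))² / 4` to `|∇f|²`, and the other `n - k` each contribute
`(φ (k + 1) - φ k)² / 4`. For `n = 2m` and `φ k = sign (2k - 2m)` the jumps of `φ` sit at
`k = m - 1, m`, hence `|∇f|` is `√(2m) / 2` on the level `k = m`, `√(m + 1) / 2` on the levels
`k = m ± 1`, and `0` elsewhere; weighting the levels by `C(2m, k)` gives the exact formula.
Since `C(2m, m + 1) = C(2m, m) · m / (m + 1)`, the limit reduces to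
`C(2m, m) √m / 4^m → 1 / √π`, which is Stirling's formula.
-/

open Finset Filter Topology

section NumTrue

variable {ι : Type*} [Fintype ι]

def numTrue (x : ι → Bool) : ℕ := ∑ i, (x i).toNat

lemma numTrue_eq_card (x : ι → Bool) : numTrue x = #{i | x i = true} := by
  simp only [numTrue, card_filter]
  exact sum_congr rfl fun i _ => by cases x i <;> rfl

lemma sum_chi_eq (x : ι → Bool) :
    ∑ i, chi (x i) = 2 * (numTrue x : ℝ) - Fintype.card ι := by
  have h (b : Bool) : chi b = 2 * (b.toNat : ℝ) - 1 := by cases b <;> norm_num [chi]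
  simp only [h, sum_sub_distrib, ← mul_sum, numTrue, Nat.cast_sum, sum_const, card_univ,
    nsmul_eq_mul, mul_one]

lemma numTrue_eq_update_false_add [DecidableEq ι] (x : ι → Bool) (j : ι) :
    numTrue x = numTrue (Function.update x j false) + (x j).toNat := by
  simp only [numTrue, ← add_sum_erase univ _ (mem_univ j), Function.update_self,
    Bool.toNat_false, zero_add]
  rw [add_comm]
  congr 1
  exact sum_congr rfl fun i hi => by rw [Function.update_of_ne (ne_of_mem_erase hi)]

theorem sum_apply_numTrue [DecidableEq ι] {M : Type*} [AddCommMonoid M] (g : ℕ → M) :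
    ∑ x : ι → Bool, g (numTrue x) =
      ∑ k ∈ range (Fintype.card ι + 1), (Fintype.card ι).choose k • g k := by
  rw [← card_univ, ← sum_powerset_apply_card, powerset_univ]
  refine sum_nbij' (fun x => ({i | x i = true} : Finset ι)) (fun s i => decide (i ∈ s))
    ?_ ?_ ?_ ?_ ?_ <;> simp [numTrue_eq_card]

end NumTrue

section SymmetricFunctions

variable {n : ℕ}

lemma pderiv_comp_numTrue (φ : ℕ → ℝ) (j : Fin n) (x : Fin n → Bool) :
    pderiv j (fun y => φ (numTrue y)) x =
      (φ (numTrue (Function.update x j false) + 1)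
        - φ (numTrue (Function.update x j false))) / 2 := by
  rw [pderiv, numTrue_eq_update_false_add (Function.update x j true) j]
  simp

lemma sq_pderiv_comp_numTrue (φ : ℕ → ℝ) (j : Fin n) (x : Fin n → Bool) :
    pderiv j (fun y => φ (numTrue y)) x ^ 2 =
      if x j = true then (φ (numTrue x) - φ (numTrue x - 1)) ^ 2 / 4
      else (φ (numTrue x + 1) - φ (numTrue x)) ^ 2 / 4 := by
  rw [pderiv_comp_numTrue, numTrue_eq_update_false_add x j, div_pow]
  cases x j <;> norm_num

-- At `numTrue x = 0` the truncated `numTrue x - 1` is harmless: its coefficient vanishes.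
theorem gradLen_comp_numTrue (φ : ℕ → ℝ) (x : Fin n → Bool) :
    gradLen (fun y => φ (numTrue y)) x =
      √(numTrue x * (φ (numTrue x) - φ (numTrue x - 1)) ^ 2
        + (n - numTrue x) * (φ (numTrue x + 1) - φ (numTrue x)) ^ 2) / 2 := by
  have hcard : (#{j | x j = true} : ℝ) + #{j | ¬x j = true} = n := by
    exact_mod_cast (card_filter_add_card_filter_not (s := univ) _).trans (card_fin n)
  rw [gradLen, Fintype.sum_congr _ _ (sq_pderiv_comp_numTrue φ · x), sum_ite, sum_const,
    sum_const, nsmul_eq_mul, nsmul_eq_mul, numTrue_eq_card, ← hcard, add_sub_cancel_left,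
    ← mul_div_assoc, ← mul_div_assoc, ← add_div, Real.sqrt_div' _ (by norm_num),
    show (4 : ℝ) = 2 ^ 2 by norm_num, Real.sqrt_sq zero_le_two]

end SymmetricFunctions

lemma signFun_eq_sign_numTrue (n : ℕ) :
    signFun n = fun x => Real.sign (2 * (numTrue x : ℝ) - n) := by
  funext x
  rw [signFun, sum_chi_eq, Fintype.card_fin]

lemma sign_two_mul_sub_two_mul (k m : ℕ) :
    Real.sign (2 * (k : ℝ) - (2 * m : ℕ)) = if k < m then -1 else if k = m then 0 else 1 := by
  push_cast
  split_ifs with hlt heq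
  · exact Real.sign_of_neg (by linarith [(Nat.cast_lt (α := ℝ)).2 hlt])
  · simp [heq]
  · exact Real.sign_of_pos (by linarith [(Nat.cast_lt (α := ℝ)).2 (by omega : m < k)])

noncomputable def gradLenSignLevel (m k : ℕ) : ℝ :=
  √(if k = m then 2 * m else if k = m + 1 ∨ k + 1 = m then m + 1 else 0) / 2

lemma gradLen_signFun_two_mul (m : ℕ) (x : Fin (2 * m) → Bool) :
    gradLen (signFun (2 * m)) x = gradLenSignLevel m (numTrue x) := by
  rw [signFun_eq_sign_numTrue, gradLenSignLevel,
    gradLen_comp_numTrue fun k => Real.sign (2 * (k : ℝ) - (2 * m : ℕ))]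
  congr 2
  simp only [sign_two_mul_sub_two_mul]
  generalize numTrue x = k
  -- `k = m = 0` is split off because there `k - 1 = k`.
  rcases (by omega :
      k = 0 ∧ m = 0 ∨ k + 1 < m ∨ k + 1 = m ∨ k = m ∧ 0 < m ∨ k = m + 1 ∨ m + 1 < k)
    with ⟨rfl, rfl⟩ | h | rfl | ⟨rfl, h⟩ | rfl | h <;>
  split_ifs <;> first | omega | (push_cast; ring)

lemma sum_choose_smul_gradLenSignLevel (m : ℕ) :
    ∑ k ∈ range (2 * m + 1), (2 * m).choose k • gradLenSignLevel m k =
      ((2 * m).choose m * √(2 * m) + 2 * (2 * m).choose (m + 1) * √(m + 1)) / 2 := by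
  rcases m.eq_zero_or_pos with rfl | hm
  · simp [gradLenSignLevel]
  have hsub : {m - 1, m, m + 1} ⊆ range (2 * m + 1) := by
    intro k hk
    simp only [mem_insert, mem_singleton] at hk
    simp only [mem_range]
    omega
  rw [← sum_subset hsub fun k _ hk => ?_]
  · rw [sum_insert (by simp; omega), sum_insert (by simp), sum_singleton]
    unfold gradLenSignLevel
    rw [nsmul_eq_mul, nsmul_eq_mul, nsmul_eq_mul, if_neg (by omega), if_pos (Or.inr (by omega)),
      if_pos rfl, if_neg (by omega), if_pos (Or.inl rfl),
      ← Nat.choose_symm (by omega : m + 1 ≤ 2 * m), show 2 * m - (m + 1) = m - 1 by omega]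
    ring
  · simp only [mem_insert, mem_singleton] at hk
    rw [gradLenSignLevel, if_neg (by omega), if_neg (by omega), Real.sqrt_zero, zero_div,
      smul_zero]

lemma cubeE_gradLen_signFun_two_mul (m : ℕ) :
    cubeE (gradLen (signFun (2 * m))) =
      ((2 * m).choose m * √(2 * m) + 2 * (2 * m).choose (m + 1) * √(m + 1))
        / 2 ^ (2 * m + 1) := by
  rw [cubeE, Fintype.sum_congr _ _ (gradLen_signFun_two_mul m), sum_apply_numTrue,
    Fintype.card_fin, sum_choose_smul_gradLenSignLevel, pow_succ]
  ring

theorem cubeE_gradLen_signFun_of_even {n : ℕ} (hn : Even n) :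
    cubeE (gradLen (signFun n)) = (2 : ℝ) ^ (-(n : ℤ) - 1) *
      (n.choose (n / 2) * √(n : ℝ) + 2 * n.choose (n / 2 + 1) * √((n : ℝ) / 2 + 1)) := by
  obtain ⟨m, rfl⟩ := hn
  rw [← two_mul, cubeE_gradLen_signFun_two_mul, Nat.mul_div_cancel_left m two_pos,
    show -((2 * m : ℕ) : ℤ) - 1 = -((2 * m + 1 : ℕ) : ℤ) by push_cast; ring, zpow_neg,
    zpow_natCast]
  push_cast
  ring_nf

open Real Nat in
lemma centralBinom_mul_sqrt_div_four_pow_eq {m : ℕ} (hm : m ≠ 0) :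
    (centralBinom m : ℝ) * √m / 4 ^ m =
      Stirling.stirlingSeq (2 * m) / Stirling.stirlingSeq m ^ 2 := by
  have hfact : ((2 * m)! : ℝ) = centralBinom m * (m ! : ℝ) ^ 2 := by
    rw [centralBinom, two_mul, ← add_choose_mul_factorial_mul_factorial]
    push_cast
    ring
  have h4 : (4 : ℝ) ^ m = 2 ^ (2 * m) := by rw [pow_mul]; norm_num
  have hsqrt : √(2 * (2 * m : ℕ) : ℝ) = 2 * √m := by
    push_cast
    rw [show (2 : ℝ) * (2 * m) = 2 ^ 2 * m by ring, sqrt_mul (by norm_num), sqrt_sq (by norm_num)]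
  have hm' : (0 : ℝ) < m := by positivity
  simp only [Stirling.stirlingSeq, hfact, hsqrt, h4]
  push_cast
  field_simp
  rw [sq_sqrt (by positivity : (0 : ℝ) ≤ 2 * m), mul_div_assoc, mul_pow, ← pow_mul]
  ring_nf
  rw [sq_sqrt hm'.le]

open Real Nat in
lemma tendsto_centralBinom_mul_sqrt_div_four_pow :
    Tendsto (fun m : ℕ => (centralBinom m : ℝ) * √m / 4 ^ m) atTop (𝓝 (√π)⁻¹) := by
  have hπ : √π ≠ 0 := by positivity
  have hlim := (Stirling.tendsto_stirlingSeq_sqrt_pi.comp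
    (tendsto_id.const_mul_atTop' two_pos)).div (Stirling.tendsto_stirlingSeq_sqrt_pi.pow 2)
    (pow_ne_zero 2 hπ)
  rw [sq, div_mul_cancel_right₀ hπ] at hlim
  exact hlim.congr' (eventually_ne_atTop 0 |>.mono fun m hm =>
    (centralBinom_mul_sqrt_div_four_pow_eq hm).symm)

open Real Nat in
lemma cubeE_gradLen_signFun_two_mul_eq_centralBinom {m : ℕ} (hm : m ≠ 0) :
    cubeE (gradLen (signFun (2 * m))) =
      (centralBinom m : ℝ) * √m / 4 ^ m * (√2 / 2 + √(m / (m + 1))) := by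
  have hchoose : ((2 * m).choose (m + 1) : ℝ) * (m + 1) = centralBinom m * m := by
    have h := Nat.choose_succ_right_eq (2 * m) m
    rw [show 2 * m - m = m by omega] at h
    exact_mod_cast h
  have hm' : (0 : ℝ) < m := by positivity
  have hs : √(m + 1 : ℝ) ^ 2 = m + 1 := sq_sqrt (by positivity)
  have hs' : √(m : ℝ) ^ 2 = m := sq_sqrt hm'.le
  rw [cubeE_gradLen_signFun_two_mul, ← centralBinom_eq_two_mul_choose, sqrt_mul zero_le_two,
    sqrt_div hm'.le, pow_succ, pow_mul, show (2 : ℝ) ^ 2 = 4 by norm_num]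
  field_simp
  linear_combination 2 * hchoose + (2 * (2 * m).choose (m + 1) : ℝ) * hs
    - (2 * centralBinom m : ℝ) * hs'

lemma tendsto_atTop_even_of_comp_two_mul {β : Type*} {f : ℕ → β} {l : Filter β}
    (h : Tendsto (fun m => f (2 * m)) atTop l) : Tendsto f (atTop ⊓ 𝓟 {n | Even n}) l := by
  refine (h.comp ((Nat.tendsto_div_const_atTop two_ne_zero).mono_left inf_le_left)).congr' ?_
  filter_upwards [mem_inf_of_right (mem_principal_self _)] with n hn
  exact congrArg f (Nat.two_mul_div_two_of_even hn)

open Real in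
theorem tendsto_cubeE_gradLen_signFun :
    Tendsto (fun n : ℕ => cubeE (gradLen (signFun n))) (atTop ⊓ 𝓟 {n | Even n})
      (𝓝 ((1 + √2) / √(2 * π))) := by
  apply tendsto_atTop_even_of_comp_two_mul
  have hratio : Tendsto (fun m : ℕ => √(m / (m + 1) : ℝ)) atTop (𝓝 1) := by
    simpa using (tendsto_natCast_div_add_atTop (1 : ℝ)).sqrt
  have hlim := tendsto_centralBinom_mul_sqrt_div_four_pow.mul (hratio.const_add (√2 / 2))
  have hconst : (√π)⁻¹ * (√2 / 2 + 1) = (1 + √2) / √(2 * π) := by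
    have h2 : √2 ^ 2 = 2 := sq_sqrt zero_le_two
    rw [sqrt_mul zero_le_two]
    field_simp
    linear_combination h2
  rw [hconst] at hlim
  exact hlim.congr' (eventually_ne_atTop 0 |>.mono fun m hm =>
    (cubeE_gradLen_signFun_two_mul_eq_centralBinom hm).symm)

/-- For even `n`, `𝔼|∇f_n| = 2^{−n−1}·(C(n,n/2)·√n + 2·C(n,n/2+1)·√(n/2+1))` for
`f_n = sign(∑ x_j)` (with `sign 0 = 0`), and consequently
`𝔼|∇f_n| → (1+√2)/√(2π)` as `n → ∞` through even values. -/
theorem grad_norm_of_sign_even :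
    (∀ n : ℕ, Even n →
      cubeE (gradLen (signFun n))
        = (2 : ℝ) ^ (-(n : ℤ) - 1) *
            ((n.choose (n / 2)) * Real.sqrt (n : ℝ)
              + 2 * (n.choose (n / 2 + 1)) * Real.sqrt ((n : ℝ) / 2 + 1))) ∧
    Filter.Tendsto (fun n : ℕ => cubeE (gradLen (signFun n)))
      (Filter.atTop ⊓ Filter.principal {n | Even n})
      (nhds ((1 + Real.sqrt 2) / Real.sqrt (2 * Real.pi))) :=
  ⟨fun _ => cubeE_gradLen_signFun_of_even, tendsto_cubeE_gradLen_signFun⟩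
end
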